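/- arXiv:2211.11189 — 7 statements merged into one kernel-verified Lean document; each statement's English description precedes it below -/
import Mathlib

section
/- Suppose A : 𝒳 → 𝒴 is an (ε,δ)-DP mechanism (with respect to some neighboring relation on 𝒳), where 𝒴 is a finite set with |𝒴| = k. Then for every η ∈ (0,1] there exists an (ε', 0)-DP mechanism A' : 𝒳 → 𝒴 for the same neighboring relation such that for every x ∈ 𝒳 the total variation distance between A(x) and A'(x) is at most η, where ε' = ε + ln(1 + (δk/η)·e^{−ε}). Moreover A' can be taken to be the mechanism that, on input x, outputs A(x) with probability 1 − η and otherwise outputs a uniformly random element of 𝒴. -/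
open scoped ENNReal

/-- Probability that a sample from the PMF `p` lands in the set `S` (as a real number). -/
noncomputable def pr {Y : Type*} (p : PMF Y) (S : Set Y) : ℝ :=
  (p.toOuterMeasure S).toReal

/-- `A` satisfies `(ε, δ)`-differential privacy with respect to the neighboring
relation `Neighbor`. -/
def IsDP {X Y : Type*} (Neighbor : X → X → Prop) (A : X → PMF Y) (ε δ : ℝ) : Prop :=
  ∀ x x', Neighbor x x' → ∀ S : Set Y, pr (A x) S ≤ Real.exp ε * pr (A x') S + δ

open Classical in
lemma pr_eq {Y : Type*} [Fintype Y] (p : PMF Y) (S : Set Y) :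
    pr p S = ∑ y ∈ Finset.univ.filter (· ∈ S), (p y).toReal := by
  unfold pr
  rw [PMF.toOuterMeasure_apply_fintype, ENNReal.toReal_sum (fun y _ => ?_),
    Finset.sum_filter]
  · apply Finset.sum_congr rfl
    intro y _
    by_cases h : y ∈ S <;> simp [Set.indicator, h]
  · by_cases h : y ∈ S <;> simp [Set.indicator, h, p.apply_ne_top y]

/-- Approximate DP implies pure DP for finite output spaces: if `A : 𝒳 → 𝒴` is
`(ε, δ)`-DP with `|𝒴| = k`, then for every `η ∈ (0, 1]` there is an `ε'`-DP mechanism `A'`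
with `ε' = ε + ln(1 + (δ k / η) e^{-ε})` that is at total variation distance at most `η`
from `A` on every input; moreover `A'` can be taken to be the mechanism that outputs
`A(x)` with probability `1 - η` and a uniformly random element of `𝒴` otherwise. -/
theorem approx_dp_implies_pure_dp_finite {X Y : Type*} [Fintype Y] (k : ℕ)
    (hk : Fintype.card Y = k)
    (Neighbor : X → X → Prop) (hsymm : Symmetric Neighbor)
    (ε δ : ℝ) (hε : 0 < ε) (hδ0 : 0 ≤ δ) (hδ1 : δ ≤ 1)
    (A : X → PMF Y) (hA : IsDP Neighbor A ε δ)
    (η : ℝ) (hη0 : 0 < η) (hη1 : η ≤ 1) :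
    ∃ A' : X → PMF Y,
      (∀ x y, (A' x y).toReal = (1 - η) * (A x y).toReal + η / k) ∧
      IsDP Neighbor A' (ε + Real.log (1 + (δ * k / η) * Real.exp (-ε))) 0 ∧
      (∀ x, (1 / 2) * ∑ y, |(A x y).toReal - (A' x y).toReal| ≤ η) := by
  classical
  rcases isEmpty_or_nonempty X with hX | hX
  · exact ⟨A, fun x => isEmptyElim x, fun x => isEmptyElim x, fun x => isEmptyElim x⟩
  obtain ⟨x0⟩ := hX
  obtain ⟨y0, -⟩ := (A x0).support_nonempty
  have hY : Nonempty Y := ⟨y0⟩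
  have hkpos : 0 < k := hk ▸ Fintype.card_pos
  have hkR : (0:ℝ) < (k:ℝ) := by exact_mod_cast hkpos
  have h1η : 0 ≤ 1 - η := by linarith
  -- the mixed mechanism
  have hsum : ∀ x : X, ∑ y : Y, (ENNReal.ofReal (1-η) * A x y + ENNReal.ofReal (η/k)) = 1 := by
    intro x
    rw [Finset.sum_add_distrib, ← Finset.mul_sum, Finset.sum_const, Finset.card_univ, hk,
      ← tsum_fintype (L := SummationFilter.unconditional Y), (A x).tsum_coe, mul_one, nsmul_eq_mul,
      ← ENNReal.ofReal_natCast, ← ENNReal.ofReal_mul (by positivity),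
      mul_div_cancel₀ _ (ne_of_gt hkR), ← ENNReal.ofReal_add h1η (le_of_lt hη0)]
    norm_num
  set A' : X → PMF Y := fun x => PMF.ofFintype _ (hsum x) with hA'def
  have hval : ∀ x y, (A' x y).toReal = (1 - η) * (A x y).toReal + η / k := by
    intro x y
    have : A' x y = ENNReal.ofReal (1-η) * A x y + ENNReal.ofReal (η/k) := rfl
    rw [this, ENNReal.toReal_add (ENNReal.mul_ne_top ENNReal.ofReal_ne_top ((A x).apply_ne_top y)) ENNReal.ofReal_ne_top, ENNReal.toReal_mul,
      ENNReal.toReal_ofReal h1η, ENNReal.toReal_ofReal (by positivity)]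
  refine ⟨A', hval, ?_, ?_⟩
  · -- pure DP
    intro x x' hnb S
    -- s = cardinality of S
    set T := Finset.univ.filter (· ∈ S) with hT
    have hprA' : ∀ z : X, pr (A' z) S = (1-η) * pr (A z) S + η * T.card / k := by
      intro z
      rw [pr_eq, pr_eq]
      rw [Finset.mul_sum]
      have : ∀ y ∈ T, ((A' z) y).toReal = (1-η) * ((A z) y).toReal + η/k := fun y _ => hval z y
      rw [Finset.sum_congr rfl this, Finset.sum_add_distrib, Finset.sum_const, nsmul_eq_mul]
      ring
    have hE : Real.exp (ε + Real.log (1 + (δ * k / η) * Real.exp (-ε)))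
        = Real.exp ε + δ * k / η := by
      have hpos : 0 < 1 + (δ * k / η) * Real.exp (-ε) := by positivity
      rw [Real.exp_add, Real.exp_log hpos, mul_add, mul_one, ← mul_assoc,
        mul_comm (Real.exp ε) (δ * k / η), mul_assoc, ← Real.exp_add]
      simp
    rw [hprA' x, hprA' x', hE, add_zero]
    rcases Finset.eq_empty_or_nonempty T with hTe | hTne
    · have hS : S = ∅ := by
        ext y; simp only [Set.mem_empty_iff_false, iff_false]
        intro hy
        exact Finset.notMem_empty y (hTe ▸ Finset.mem_filter.2 ⟨Finset.mem_univ y, hy⟩)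
      have : pr (A x) S = 0 := by rw [hS]; simp [pr]
      have h2 : pr (A x') S = 0 := by rw [hS]; simp [pr]
      rw [this, h2, hTe]
      simp
    · have hs1 : (1:ℝ) ≤ T.card := by exact_mod_cast Finset.card_pos.2 hTne
      have hsk : (T.card : ℝ) ≤ k := by
        rw [← hk]
        exact_mod_cast (Finset.card_filter_le _ _).trans_eq (Finset.card_univ)
      have hP := hA x x' hnb S
      set P := pr (A x) S
      set P' := pr (A x') S
      have hP'0 : 0 ≤ P' := ENNReal.toReal_nonneg
      have hE1 : 1 ≤ Real.exp ε := by
        rw [← Real.exp_zero]; exact Real.exp_le_exp.2 (le_of_lt hε)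
      set s : ℝ := (T.card : ℝ)
      have key : δ * k / η * (η * s / k) = δ * s := by
        field_simp
      have hr : (0:ℝ) ≤ η * s / k := by positivity
      nlinarith [mul_le_mul_of_nonneg_left hP h1η,
        mul_le_mul_of_nonneg_right hE1 hr,
        mul_le_mul_of_nonneg_left hs1 hδ0,
        mul_nonneg hδ0 (le_of_lt hη0),
        mul_nonneg (mul_nonneg (div_nonneg (mul_nonneg hδ0 (le_of_lt hkR)) (le_of_lt hη0)) h1η) hP'0]
  · -- TV distance
    intro x
    have : ∀ y : Y, |(A x y).toReal - (A' x y).toReal| = η * |(A x y).toReal - 1/k| := by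
      intro y
      have heq : (A x y).toReal - ((1-η)*(A x y).toReal + η/k) = η * ((A x y).toReal - 1/k) := by
        field_simp
        ring
      rw [hval x y, heq, abs_mul, abs_of_pos hη0]
    rw [Finset.sum_congr rfl (fun y _ => this y), ← Finset.mul_sum]
    have hb : ∑ y : Y, |(A x y).toReal - 1/k| ≤ ∑ y : Y, ((A x y).toReal + 1/k) := by
      apply Finset.sum_le_sum
      intro y _
      have h0 : 0 ≤ (A x y).toReal := ENNReal.toReal_nonneg
      have h1 : 0 < 1/(k:ℝ) := by positivity
      rw [abs_sub_le_iff]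
      constructor <;> linarith
    have hsum1 : ∑ y : Y, (A x y).toReal = 1 := by
      rw [← ENNReal.toReal_sum (fun y _ => (A x).apply_ne_top y), ← tsum_fintype (L := SummationFilter.unconditional Y),
        (A x).tsum_coe, ENNReal.toReal_one]
    have hsum2 : ∑ y : Y, ((A x y).toReal + 1/(k:ℝ)) = 2 := by
      rw [Finset.sum_add_distrib, hsum1, Finset.sum_const, Finset.card_univ, hk, nsmul_eq_mul]
      field_simp
      norm_num
    calc (1/2) * (η * ∑ y : Y, |(A x y).toReal - 1/k|)
        ≤ (1/2) * (η * 2) := by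
          apply mul_le_mul_of_nonneg_left _ (by norm_num)
          apply mul_le_mul_of_nonneg_left _ (le_of_lt hη0)
          rw [← hsum2]; exact hb
      _ = η := by ring
end

section
/- Let R : 𝒳 → 𝒴 be an ε-LDP local randomizer. Then for all x, x' ∈ 𝒳 there exists a randomized algorithm Q : {0,1} → 𝒴 (assigning to each bit a probability measure on 𝒴) such that, as probability measures, R(x) = (e^ε/(e^ε + 1))·Q(0) + (1/(e^ε + 1))·Q(1) and R(x') = (1/(e^ε + 1))·Q(0) + (e^ε/(e^ε + 1))·Q(1). -/
open scoped ENNReal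

/-- The local randomizer `R` satisfies `ε`-local differential privacy. -/
def IsPureLDP {X Y : Type*} (R : X → PMF Y) (ε : ℝ) : Prop :=
  ∀ x x' : X, ∀ S : Set Y, pr (R x) S ≤ Real.exp ε * pr (R x') S

theorem pr_singleton {Y : Type*} (p : PMF Y) (y : Y) : pr p {y} = (p y).toReal := by
  simp [pr, PMF.toOuterMeasure_apply_singleton]

theorem pr_univ {Y : Type*} (p : PMF Y) : pr p Set.univ = 1 := by
  simp [pr, PMF.toOuterMeasure_apply, PMF.tsum_coe]

/-- Any `ε`-LDP local randomizer, on any pair of inputs `x, x'`, is a postprocessing of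
binary randomized response: there is a randomized algorithm `Q : {0,1} → 𝒴` such that
`R(x) = e^ε/(e^ε+1)·Q(0) + 1/(e^ε+1)·Q(1)` and
`R(x') = 1/(e^ε+1)·Q(0) + e^ε/(e^ε+1)·Q(1)` as probability measures. -/
theorem ldp_randomizer_as_postprocessing_of_rr {X Y : Type*} (ε : ℝ)
    (R : X → PMF Y) (hR : IsPureLDP R ε) (x x' : X) :
    ∃ Q : Bool → PMF Y,
      (∀ y : Y, (R x y).toReal =
          (Real.exp ε / (Real.exp ε + 1)) * (Q false y).toReal
            + (1 / (Real.exp ε + 1)) * (Q true y).toReal) ∧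
      (∀ y : Y, (R x' y).toReal =
          (1 / (Real.exp ε + 1)) * (Q false y).toReal
            + (Real.exp ε / (Real.exp ε + 1)) * (Q true y).toReal) := by
  set E := Real.exp ε with hEdef
  have hEpos : 0 < E := Real.exp_pos ε
  have hE1 : 1 ≤ E := by
    have := hR x x' Set.univ
    rw [pr_univ, pr_univ, mul_one] at this
    exact this
  have hEp1 : E + 1 ≠ 0 := by positivity
  -- pointwise LDP bounds (real)
  have hb : ∀ y, ((R x) y).toReal ≤ E * ((R x') y).toReal := by
    intro y
    have := hR x x' {y}
    rwa [pr_singleton, pr_singleton] at this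
  have hb' : ∀ y, ((R x') y).toReal ≤ E * ((R x) y).toReal := by
    intro y
    have := hR x' x {y}
    rwa [pr_singleton, pr_singleton] at this
  rcases eq_or_lt_of_le hE1 with hE | hE
  · -- E = 1 : the two distributions coincide
    have heq : ∀ y, ((R x') y).toReal = ((R x) y).toReal := by
      intro y
      have h1 := hb y; have h2 := hb' y
      rw [← hE, one_mul] at h1 h2
      linarith
    refine ⟨fun _ => R x, fun y => ?_, fun y => ?_⟩
    · show ((R x) y).toReal = E / (E + 1) * ((R x) y).toReal + 1 / (E + 1) * ((R x) y).toReal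
      field_simp
    · show ((R x') y).toReal = 1 / (E + 1) * ((R x) y).toReal + E / (E + 1) * ((R x) y).toReal
      rw [heq y]
      field_simp
      ring
  · -- E > 1 : explicit construction
    have hEm1 : (0:ℝ) < E - 1 := by linarith
    set EE : ℝ≥0∞ := ENNReal.ofReal E with hEE
    set D : ℝ≥0∞ := ENNReal.ofReal (E - 1) with hD
    have hDne0 : D ≠ 0 := by simp [hD, ENNReal.ofReal_eq_zero]; linarith
    have hDnetop : D ≠ ∞ := ENNReal.ofReal_ne_top
    -- ENNReal pointwise bounds
    have hub : ∀ y, (R x') y ≤ EE * (R x) y := by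
      intro y
      have h := hb' y
      calc (R x') y = ENNReal.ofReal (((R x') y).toReal) := by
            rw [ENNReal.ofReal_toReal (PMF.apply_ne_top _ _)]
        _ ≤ ENNReal.ofReal (E * ((R x) y).toReal) := ENNReal.ofReal_le_ofReal h
        _ = EE * (R x) y := by
            rw [ENNReal.ofReal_mul hEpos.le, ENNReal.ofReal_toReal (PMF.apply_ne_top _ _)]
    have hub' : ∀ y, (R x) y ≤ EE * (R x') y := by
      intro y
      have h := hb y
      calc (R x) y = ENNReal.ofReal (((R x) y).toReal) := by
            rw [ENNReal.ofReal_toReal (PMF.apply_ne_top _ _)]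
        _ ≤ ENNReal.ofReal (E * ((R x') y).toReal) := ENNReal.ofReal_le_ofReal h
        _ = EE * (R x') y := by
            rw [ENNReal.ofReal_mul hEpos.le, ENNReal.ofReal_toReal (PMF.apply_ne_top _ _)]
    have hEEnetop : EE ≠ ∞ := ENNReal.ofReal_ne_top
    have hmul_ne_top : ∀ (p : PMF Y) y, EE * p y ≠ ∞ :=
      fun p y => ENNReal.mul_ne_top hEEnetop (PMF.apply_ne_top _ _)
    -- generic sum lemma
    have hsum : ∀ (p q : PMF Y), (∀ y, q y ≤ EE * p y) →
        ∑' y, (EE * p y - q y) / D = 1 := by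
      intro p q hle
      have h1 : ∑' y, (EE * p y - q y) = D := by
        have hadd : ∑' y, ((EE * p y - q y) + q y) = ∑' y, (EE * p y) := by
          congr 1; funext y; rw [tsub_add_cancel_of_le (hle y)]
        rw [ENNReal.tsum_add, ENNReal.tsum_mul_left, PMF.tsum_coe, PMF.tsum_coe,
          mul_one] at hadd
        have : ∑' y, (EE * p y - q y) = EE - 1 :=
          ENNReal.eq_sub_of_add_eq (by simp) hadd
        rw [this, hD, hEE, ← ENNReal.ofReal_one, ← ENNReal.ofReal_sub _ (by norm_num)]
      calc ∑' y, (EE * p y - q y) / D = (∑' y, (EE * p y - q y)) / D := by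
            simp only [div_eq_mul_inv, ENNReal.tsum_mul_right]
        _ = 1 := by rw [h1, ENNReal.div_self hDne0 hDnetop]
    -- toReal of the construction
    have htr : ∀ (p q : PMF Y) y, q y ≤ EE * p y →
        ((EE * p y - q y) / D).toReal = (E * (p y).toReal - (q y).toReal) / (E - 1) := by
      intro p q y hle
      rw [ENNReal.toReal_div, ENNReal.toReal_sub_of_le hle (hmul_ne_top p y),
        ENNReal.toReal_mul, hEE, hD, ENNReal.toReal_ofReal hEpos.le,
        ENNReal.toReal_ofReal hEm1.le]
    set Q0 : PMF Y := ⟨fun y => (EE * (R x) y - (R x') y) / D,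
      (ENNReal.summable.hasSum_iff).2 (hsum (R x) (R x') hub)⟩ with hQ0def
    set Q1 : PMF Y := ⟨fun y => (EE * (R x') y - (R x) y) / D,
      (ENNReal.summable.hasSum_iff).2 (hsum (R x') (R x) hub')⟩ with hQ1def
    have hQ0 : ∀ y, Q0 y = (EE * (R x) y - (R x') y) / D := fun y => rfl
    have hQ1 : ∀ y, Q1 y = (EE * (R x') y - (R x) y) / D := fun y => rfl
    refine ⟨fun b => if b then Q1 else Q0, fun y => ?_, fun y => ?_⟩ <;>
    · simp only [if_true, if_false, Bool.false_eq_true, hQ0, hQ1]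
      rw [htr _ _ y (hub y), htr _ _ y (hub' y)]
      field_simp
      ring
end

section
/- There exist ε > 0, δ ∈ (0,1), and a local randomizer R : {0,1} → {1,2,3} such that R is a deletion (ε,δ)-LDP randomizer but R is not a (2ε, 2δ)-replacement LDP randomizer. Concretely, for ε = 1/4 and δ = 1/6, the randomizer with R(0) taking value 1 with probability e^ε/3, value 2 with probability e^{−ε}(1/3 − δ), and value 3 with the remaining probability, and R(1) taking value 1 with probability e^{−ε}/3, value 2 with probability e^ε/3 + δ, and value 3 with the remaining probability, is deletion (ε,δ)-LDP with uniform reference distribution on {1,2,3}, yet satisfies Pr[R(1) = 2] > e^{2ε}·Pr[R(0) = 2] + 2δ. -/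
open scoped ENNReal

/-!
Deletion privacy compares each `R x` only with the reference `R₀`, so `R true` and `R false` may
spend the additive slack `δ` in opposite directions on the same output `1` (the paper's value
`2`): `R true 1 = e^ε/3 + δ` sits at the upper end allowed by `R₀ 1 = 1/3`, and
`R false 1 = e^{-ε}(1/3 - δ)` at the lower end. Chaining the two bounds through `R₀` costs the
additive term `(e^ε + 1) δ`, not `2δ`, and here the chain is tight: `e^{2ε} R false 1 + 2δ`
is `e^ε (1/3 - δ) + 2δ`, short of `R true 1` by `(e^ε - 1) δ`.

The deletion bounds for all events follow from pointwise bounds with nonnegative excesses summing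
to at most `δ`; for this `R` each of the four one-sided bounds has its excess at a single output.
-/

open Real Finset

noncomputable section

theorem PMF.exists_toReal_eq {α : Type*} [Fintype α] (f : α → ℝ) (hf : ∀ a, 0 ≤ f a)
    (hsum : ∑ a, f a = 1) : ∃ p : PMF α, ∀ a, (p a).toReal = f a := by
  refine ⟨PMF.ofFintype (fun a => ENNReal.ofReal (f a)) ?_, fun a => ?_⟩
  · rw [← ENNReal.ofReal_sum_of_nonneg fun a _ => hf a, hsum, ENNReal.ofReal_one]
  · rw [PMF.ofFintype_apply, ENNReal.toReal_ofReal (hf a)]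

theorem pr_coe_finset {Y : Type*} (p : PMF Y) (s : Finset Y) :
    pr p s = ∑ y ∈ s, (p y).toReal := by
  rw [pr, PMF.toOuterMeasure_apply_finset, ENNReal.toReal_sum fun y _ => PMF.apply_ne_top p y]

theorem pr_le_mul_pr_add {Y : Type*} [Fintype Y] {p q : PMF Y} {c δ : ℝ} (d : Y → ℝ)
    (hd : 0 ≤ d) (hpq : ∀ y, (p y).toReal ≤ c * (q y).toReal + d y)
    (hdδ : ∑ y, d y ≤ δ) (S : Set Y) : pr p S ≤ c * pr q S + δ := by
  classical
  rw [← Set.coe_toFinset S, pr_coe_finset, pr_coe_finset, mul_sum]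
  calc ∑ y ∈ S.toFinset, (p y).toReal
      ≤ ∑ y ∈ S.toFinset, (c * (q y).toReal + d y) := sum_le_sum fun y _ => hpq y
    _ = ∑ y ∈ S.toFinset, c * (q y).toReal + ∑ y ∈ S.toFinset, d y := sum_add_distrib
    _ ≤ ∑ y ∈ S.toFinset, c * (q y).toReal + δ := by
      grw [sum_le_sum_of_subset_of_nonneg (subset_univ _) fun y _ _ => hd y, hdδ]

def IsDeletionLDP {X Y : Type*} (R : X → PMF Y) (R₀ : PMF Y) (ε δ : ℝ) : Prop :=
  ∀ x S, exp (-ε) * (pr R₀ S - δ) ≤ pr (R x) S ∧ pr (R x) S ≤ exp ε * pr R₀ S + δ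

theorem isDeletionLDP_of_le_exp_mul_add {X Y : Type*} {R : X → PMF Y} {R₀ : PMF Y} {ε δ : ℝ}
    (h : ∀ x S, pr R₀ S ≤ exp ε * pr (R x) S + δ ∧ pr (R x) S ≤ exp ε * pr R₀ S + δ) :
    IsDeletionLDP R R₀ ε δ := by
  intro x S
  refine ⟨?_, (h x S).2⟩
  rw [exp_neg, ← div_eq_inv_mul, div_le_iff₀' (exp_pos ε)]
  linarith [(h x S).1]

def counterexampleProb (ε δ : ℝ) : Bool → Fin 3 → ℝ
  | false => ![exp ε / 3, exp (-ε) * (1 / 3 - δ), 1 - (exp ε / 3 + exp (-ε) * (1 / 3 - δ))]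
  | true => ![exp (-ε) / 3, exp ε / 3 + δ, 1 - (exp (-ε) / 3 + exp ε / 3 + δ)]

theorem sum_counterexampleProb (ε δ : ℝ) (x : Bool) : ∑ y, counterexampleProb ε δ x y = 1 := by
  rw [Fin.sum_univ_three]
  cases x <;> dsimp [counterexampleProb] <;> ring

theorem counterexampleProb_nonneg {ε : ℝ} (hε : 0 ≤ ε) (hε' : exp ε ≤ 3 / 2) (x : Bool)
    (y : Fin 3) : 0 ≤ counterexampleProb ε (1 / 6) x y := by
  have hexp : 1 ≤ exp ε := one_le_exp hε
  have hexp_neg : exp (-ε) ≤ 1 := exp_le_one_iff.2 (by linarith)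
  have hexp_neg_pos : 0 < exp (-ε) := exp_pos _
  cases x <;> fin_cases y <;>
    simp only [counterexampleProb, Fin.zero_eta, Fin.mk_one, Fin.reduceFinMk, Fin.isValue,
      Matrix.cons_val_zero, Matrix.cons_val_one, Matrix.cons_val] <;>
    linarith

theorem isDeletionLDP_counterexample {ε : ℝ} (hε : 0 ≤ ε) (hε' : exp ε ≤ 3 / 2)
    {R : Bool → PMF (Fin 3)} (hR : ∀ x y, (R x y).toReal = counterexampleProb ε (1 / 6) x y) :
    IsDeletionLDP R (PMF.uniformOfFintype (Fin 3)) ε (1 / 6) := by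
  have hexp : 1 ≤ exp ε := one_le_exp hε
  have hexp_mul : exp ε * exp (-ε) = 1 := by rw [← exp_add, add_neg_cancel, exp_zero]
  have hexp_neg_pos : 0 < exp (-ε) := exp_pos _
  have hunif (y : Fin 3) : (PMF.uniformOfFintype (Fin 3) y).toReal = 1 / 3 := by simp
  have hd (y₀ : Fin 3) : 0 ≤ (Pi.single y₀ (1 / 6) : Fin 3 → ℝ) := Pi.single_nonneg.2 (by norm_num)
  have hsum (y₀ : Fin 3) : ∑ y, (Pi.single y₀ (1 / 6) : Fin 3 → ℝ) y ≤ 1 / 6 := by simp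
  refine isDeletionLDP_of_le_exp_mul_add fun x S => ?_
  cases x <;>
  [refine ⟨pr_le_mul_pr_add _ (hd 1) (fun y => ?_) (hsum 1) S,
    pr_le_mul_pr_add _ (hd 2) (fun y => ?_) (hsum 2) S⟩;
  refine ⟨pr_le_mul_pr_add _ (hd 2) (fun y => ?_) (hsum 2) S,
    pr_le_mul_pr_add _ (hd 1) (fun y => ?_) (hsum 1) S⟩] <;>
  fin_cases y <;>
  simp only [hR, hunif, counterexampleProb, Fin.zero_eta, Fin.mk_one, Fin.reduceFinMk, Fin.isValue,
    Matrix.cons_val_zero, Matrix.cons_val_one, Matrix.cons_val, Pi.single_eq_same,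
    Pi.single_eq_of_ne, ne_eq, Fin.reduceEq, not_false_eq_true, add_zero] <;>
  nlinarith

theorem exp_two_mul_mul_counterexampleProb_add_lt {ε δ : ℝ} (hε : 0 < ε) (hδ : 0 < δ) :
    exp (2 * ε) * counterexampleProb ε δ false 1 + 2 * δ < counterexampleProb ε δ true 1 := by
  have hexp : exp (2 * ε) * exp (-ε) = exp ε := by rw [← exp_add]; ring_nf
  show exp (2 * ε) * (exp (-ε) * (1 / 3 - δ)) + 2 * δ < exp ε / 3 + δ
  rw [← mul_assoc, hexp]
  nlinarith [one_lt_exp_iff.2 hε]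

theorem exp_quarter_le_three_halves : exp (1 / 4) ≤ 3 / 2 := by
  have := exp_bound_div_one_sub_of_interval' (x := 1 / 4) (by norm_num) (by norm_num)
  norm_num at this ⊢
  linarith

end

/-- There exist `ε > 0`, `δ ∈ (0,1)` — concretely `ε = 1/4`, `δ = 1/6` — and a local
randomizer `R : {0,1} → {1,2,3}` (outputs encoded as `Fin 3`, with `0, 1, 2` standing
for the values `1, 2, 3`) with the stated probabilities, which is a deletion
`(ε, δ)`-LDP randomizer with uniform reference distribution on `{1,2,3}`, yet satisfies
`Pr[R(1) = 2] > e^{2ε} Pr[R(0) = 2] + 2δ`, hence is not `(2ε, 2δ)`-replacement LDP. -/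
theorem deletion_to_replacement_counterexample :
    ∃ (ε δ : ℝ), ε = 1 / 4 ∧ δ = 1 / 6 ∧ 0 < ε ∧ 0 < δ ∧ δ < 1 ∧
    ∃ R : Bool → PMF (Fin 3),
      -- the probabilities of R(0)
      (R false 0).toReal = Real.exp ε / 3 ∧
      (R false 1).toReal = Real.exp (-ε) * (1 / 3 - δ) ∧
      (R false 2).toReal = 1 - (Real.exp ε / 3 + Real.exp (-ε) * (1 / 3 - δ)) ∧
      -- the probabilities of R(1)
      (R true 0).toReal = Real.exp (-ε) / 3 ∧
      (R true 1).toReal = Real.exp ε / 3 + δ ∧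
      (R true 2).toReal = 1 - (Real.exp (-ε) / 3 + Real.exp ε / 3 + δ) ∧
      -- R is deletion (ε, δ)-LDP with uniform reference distribution
      (∀ (x : Bool) (S : Set (Fin 3)),
        Real.exp (-ε) * (pr (PMF.uniformOfFintype (Fin 3)) S - δ) ≤ pr (R x) S ∧
        pr (R x) S ≤ Real.exp ε * pr (PMF.uniformOfFintype (Fin 3)) S + δ) ∧
      -- but R is not (2ε, 2δ)-replacement LDP: the bound fails on x = 1, x' = 0, S = {2}
      (R true 1).toReal > Real.exp (2 * ε) * (R false 1).toReal + 2 * δ := by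
  have hε : (0 : ℝ) < 1 / 4 := by norm_num
  have hδ : (0 : ℝ) < 1 / 6 := by norm_num
  choose R hR using fun x => PMF.exists_toReal_eq (counterexampleProb (1 / 4) (1 / 6) x)
    (counterexampleProb_nonneg hε.le exp_quarter_le_three_halves x) (sum_counterexampleProb _ _ x)
  refine ⟨1 / 4, 1 / 6, rfl, rfl, hε, hδ, by norm_num, R, hR false 0, hR false 1, hR false 2,
    hR true 0, hR true 1, hR true 2,
    isDeletionLDP_counterexample hε.le exp_quarter_le_three_halves hR, ?_⟩
  rw [hR, hR]
  exact exp_two_mul_mul_counterexampleProb_add_lt hε hδ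
end

section
/- Fix any ε > 0 and δ ∈ [0,1]. If R : 𝒳 → 𝒴 is a deletion (ε,δ)-LDP randomizer with reference distribution R₀, then there exists a local randomizer R' : 𝒳 → 𝒴 such that (i) for every x ∈ 𝒳 the total variation distance between R(x) and R'(x) is at most δ, and (ii) R' is a deletion (ε,0)-LDP randomizer with the same reference distribution R₀. -/
open scoped ENNReal

/-- `R₀` is a reference distribution witnessing that `R` is a deletion `(ε, δ)`-LDP
randomizer. -/
def IsDeletionLDPWith {X Y : Type*} (R : X → PMF Y) (R₀ : PMF Y) (ε δ : ℝ) : Prop :=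
  ∀ x : X, ∀ S : Set Y,
    Real.exp (-ε) * (pr R₀ S - δ) ≤ pr (R x) S ∧ pr (R x) S ≤ Real.exp ε * pr R₀ S + δ

namespace DelLDPAux

variable {Y : Type*}

lemma tsum_sub' {f g : Y → ℝ≥0∞} (hg : ∑' y, g y ≠ ⊤) (h : ∀ y, g y ≤ f y) :
    ∑' y, (f y - g y) = ∑' y, f y - ∑' y, g y := by
  have : ∑' y, (f y - g y) + ∑' y, g y = ∑' y, f y := by
    rw [← ENNReal.tsum_add]
    exact tsum_congr fun y => tsub_add_cancel_of_le (h y)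
  exact ENNReal.eq_sub_of_add_eq hg this

lemma sub_min' (a b : ℝ≥0∞) : a - min a b = a - b := by
  rcases le_total a b with h | h
  · simp [min_eq_left h, tsub_eq_zero_of_le h]
  · simp [min_eq_right h]

lemma max_sub' (a b : ℝ≥0∞) : max a b - a = b - a := by
  rcases le_total a b with h | h
  · simp [max_eq_right h]
  · simp [max_eq_left h, tsub_eq_zero_of_le h]

lemma max_eq_add_sub (a b : ℝ≥0∞) : max a b = b + (a - b) := by
  rcases le_total a b with h | h
  · simp [max_eq_right h, tsub_eq_zero_of_le h]
  · simp [max_eq_left h, add_tsub_cancel_of_le h]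

lemma pr_eq (p : PMF Y) (S : Set Y) : pr p S = (∑' y, S.indicator p y).toReal := by
  rw [pr, PMF.toOuterMeasure_apply]

lemma tsum_ind_le_one (p : PMF Y) (S : Set Y) : ∑' y, S.indicator p y ≤ 1 := by
  rw [← p.tsum_coe]
  exact ENNReal.tsum_le_tsum fun y => Set.indicator_le_self S p y

lemma tsum_ind_ne_top (p : PMF Y) (S : Set Y) : ∑' y, S.indicator p y ≠ ⊤ :=
  ((tsum_ind_le_one p S).trans_lt ENNReal.one_lt_top).ne

lemma ofReal_pr (p : PMF Y) (S : Set Y) :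
    ENNReal.ofReal (pr p S) = ∑' y, S.indicator p y := by
  rw [pr_eq, ENNReal.ofReal_toReal (tsum_ind_ne_top p S)]

/-- Key lemma A: if the "one-sided L1" distance is at most δ then all set probabilities
differ by at most δ. -/
lemma tv_of_tsum_sub_le {p p' : PMF Y} {δ : ℝ} (hδ0 : 0 ≤ δ)
    (hD : ∑' y, (p y - p' y) ≤ ENNReal.ofReal δ) :
    ∀ S : Set Y, |pr p S - pr p' S| ≤ δ := by
  set D := ∑' y, (p y - p' y) with hDdef
  set D' := ∑' y, (p' y - p y) with hD'def
  have hDne : D ≠ ⊤ := (hD.trans_lt ENNReal.ofReal_lt_top).ne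
  have hmax : (1 : ℝ≥0∞) + D = 1 + D' := by
    have h1 : ∑' y, max (p y) (p' y) = 1 + D := by
      rw [tsum_congr fun y => max_eq_add_sub (p y) (p' y), ENNReal.tsum_add, p'.tsum_coe]
    have h2 : ∑' y, max (p y) (p' y) = 1 + D' := by
      rw [tsum_congr fun y => (max_comm (p y) (p' y)).trans (max_eq_add_sub (p' y) (p y)),
        ENNReal.tsum_add, p.tsum_coe]
    rw [← h1, ← h2]
  have hDD' : D = D' := (ENNReal.add_right_inj ENNReal.one_ne_top).mp hmax
  have hD' : D' ≤ ENNReal.ofReal δ := hDD' ▸ hD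
  intro S
  have key : ∀ (a b : PMF Y), ∑' y, (a y - b y) ≤ ENNReal.ofReal δ →
      pr a S ≤ pr b S + δ := by
    intro a b h
    have hle : ∑' y, S.indicator a y ≤ ∑' y, S.indicator b y + ∑' y, (a y - b y) := by
      rw [← ENNReal.tsum_add]
      refine ENNReal.tsum_le_tsum fun y => ?_
      by_cases hy : y ∈ S
      · simp only [Set.indicator_of_mem hy]
        exact le_add_tsub
      · simp [Set.indicator_of_notMem hy]
    have hfin : ∑' y, S.indicator b y + ∑' y, (a y - b y) ≠ ⊤ :=
      ENNReal.add_ne_top.mpr ⟨tsum_ind_ne_top b S, (h.trans_lt ENNReal.ofReal_lt_top).ne⟩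
    calc pr a S = (∑' y, S.indicator a y).toReal := pr_eq a S
      _ ≤ (∑' y, S.indicator b y + ∑' y, (a y - b y)).toReal :=
          ENNReal.toReal_mono hfin hle
      _ = (∑' y, S.indicator b y).toReal + (∑' y, (a y - b y)).toReal :=
          ENNReal.toReal_add (tsum_ind_ne_top b S) (h.trans_lt ENNReal.ofReal_lt_top).ne
      _ ≤ pr b S + δ := by
          rw [← pr_eq]
          exact add_le_add_right (ENNReal.toReal_le_of_le_ofReal hδ0 h) _
  have h1 := key p p' hD
  have h2 := key p' p hD'
  rw [abs_le]; constructor <;> linarith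

/-- Key lemma: the mass above `e^ε q` is at most δ. -/
lemma excess_le {p q : PMF Y} {ε δ : ℝ}
    (h : ∀ S : Set Y, pr p S ≤ Real.exp ε * pr q S + δ) (hδ0 : 0 ≤ δ) :
    ∑' y, (p y - ENNReal.ofReal (Real.exp ε) * q y) ≤ ENNReal.ofReal δ := by
  set Eε := ENNReal.ofReal (Real.exp ε) with hEε
  set A : Set Y := {y | Eε * q y < p y} with hA
  have hptwise : ∀ y, p y - Eε * q y = A.indicator p y - A.indicator (fun y => Eε * q y) y := by
    intro y
    by_cases hy : y ∈ A
    · simp [Set.indicator_of_mem hy]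
    · simp only [Set.indicator_of_notMem hy]
      rw [tsub_eq_zero_of_le (le_of_not_gt hy), tsub_self]
  have hindle : ∀ y, A.indicator (fun y => Eε * q y) y ≤ A.indicator p y := by
    intro y
    by_cases hy : y ∈ A
    · simp only [Set.indicator_of_mem hy]; exact (hA ▸ hy).le
    · simp [Set.indicator_of_notMem hy]
  have hgfin : ∑' y, A.indicator (fun y => Eε * q y) y ≠ ⊤ := by
    refine ((ENNReal.tsum_le_tsum hindle).trans_lt ?_).ne
    exact (tsum_ind_le_one p A).trans_lt ENNReal.one_lt_top
  calc ∑' y, (p y - Eε * q y)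
      = ∑' y, (A.indicator p y - A.indicator (fun y => Eε * q y) y) :=
        tsum_congr hptwise
    _ = ∑' y, A.indicator p y - ∑' y, A.indicator (fun y => Eε * q y) y :=
        tsum_sub' hgfin hindle
    _ ≤ ENNReal.ofReal δ := by
        rw [tsub_le_iff_right]
        have hq : ∑' y, A.indicator (fun y => Eε * q y) y = Eε * ∑' y, A.indicator q y := by
          rw [← ENNReal.tsum_mul_left]
          refine tsum_congr fun y => ?_
          by_cases hy : y ∈ A <;>
            simp [Set.indicator_of_mem, Set.indicator_of_notMem, hy]
        rw [hq, ← ofReal_pr p A, ← ofReal_pr q A]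
        calc ENNReal.ofReal (pr p A) ≤ ENNReal.ofReal (Real.exp ε * pr q A + δ) :=
              ENNReal.ofReal_le_ofReal (h A)
          _ ≤ ENNReal.ofReal (Real.exp ε * pr q A) + ENNReal.ofReal δ :=
              ENNReal.ofReal_add_le
          _ = ENNReal.ofReal δ + Eε * ENNReal.ofReal (pr q A) := by
              rw [ENNReal.ofReal_mul (Real.exp_pos ε).le, add_comm, hEε]

/-- Key lemma: the mass below `e^{-ε} q` is at most δ. -/
lemma deficit_le {p q : PMF Y} {ε δ : ℝ}
    (h : ∀ S : Set Y, Real.exp (-ε) * (pr q S - δ) ≤ pr p S) (hδ0 : 0 ≤ δ) (hε : 0 < ε) :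
    ∑' y, (ENNReal.ofReal (Real.exp (-ε)) * q y - p y) ≤ ENNReal.ofReal δ := by
  set Eν := ENNReal.ofReal (Real.exp (-ε)) with hEν
  set B : Set Y := {y | p y < Eν * q y} with hB
  have hptwise : ∀ y, Eν * q y - p y
      = B.indicator (fun y => Eν * q y) y - B.indicator p y := by
    intro y
    by_cases hy : y ∈ B
    · simp [Set.indicator_of_mem hy]
    · simp only [Set.indicator_of_notMem hy]
      rw [tsub_eq_zero_of_le (le_of_not_gt hy)]; simp
  have hindle : ∀ y, B.indicator p y ≤ B.indicator (fun y => Eν * q y) y := by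
    intro y
    by_cases hy : y ∈ B
    · simp only [Set.indicator_of_mem hy]; exact (hB ▸ hy).le
    · simp [Set.indicator_of_notMem hy]
  calc ∑' y, (Eν * q y - p y)
      = ∑' y, (B.indicator (fun y => Eν * q y) y - B.indicator p y) := tsum_congr hptwise
    _ = ∑' y, B.indicator (fun y => Eν * q y) y - ∑' y, B.indicator p y :=
        tsum_sub' (tsum_ind_ne_top p B) hindle
    _ ≤ ENNReal.ofReal δ := by
        rw [tsub_le_iff_right]
        have hq : ∑' y, B.indicator (fun y => Eν * q y) y = Eν * ∑' y, B.indicator q y := by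
          rw [← ENNReal.tsum_mul_left]
          refine tsum_congr fun y => ?_
          by_cases hy : y ∈ B <;>
            simp [Set.indicator_of_mem, Set.indicator_of_notMem, hy]
        rw [hq, ← ofReal_pr p B, ← ofReal_pr q B]
        have hreal : Real.exp (-ε) * pr q B ≤ δ + pr p B := by
          have := h B
          have hexp : Real.exp (-ε) ≤ 1 := Real.exp_le_one_iff.mpr (by linarith)
          nlinarith [(Real.exp_pos (-ε)).le]
        calc Eν * ENNReal.ofReal (pr q B)
            = ENNReal.ofReal (Real.exp (-ε) * pr q B) := by
              rw [ENNReal.ofReal_mul (Real.exp_pos (-ε)).le]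
          _ ≤ ENNReal.ofReal (δ + pr p B) := ENNReal.ofReal_le_ofReal hreal
          _ ≤ ENNReal.ofReal δ + ENNReal.ofReal (pr p B) := ENNReal.ofReal_add_le

section Adjust

variable (Eν Eε : ℝ≥0∞) (p q : PMF Y)

/-- The clamped (unnormalized) density. -/
noncomputable def mfun : Y → ℝ≥0∞ := fun y => max (Eν * q y) (min (p y) (Eε * q y))

/-- The normalized adjusted density. -/
noncomputable def adjust : Y → ℝ≥0∞ :=
  if (∑' y, mfun Eν Eε p q y) ≤ 1 then
    fun y => mfun Eν Eε p q y +
      ((1 - ∑' z, mfun Eν Eε p q z) / (Eε - ∑' z, mfun Eν Eε p q z)) *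
        (Eε * q y - mfun Eν Eε p q y)
  else
    fun y => mfun Eν Eε p q y -
      (((∑' z, mfun Eν Eε p q z) - 1) / ((∑' z, mfun Eν Eε p q z) - Eν)) *
        (mfun Eν Eε p q y - Eν * q y)

variable {Eν Eε p q}
variable (hν : Eν ≤ 1) (hε1 : 1 < Eε) (hεt : Eε ≠ ⊤)

include hν hε1 in
lemma mfun_le (y : Y) : mfun Eν Eε p q y ≤ Eε * q y :=
  max_le (mul_le_mul_left (hν.trans hε1.le) _) (min_le_right _ _)

lemma le_mfun (y : Y) : Eν * q y ≤ mfun Eν Eε p q y := le_max_left _ _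

include hν hε1 in
lemma tsum_mfun_le : ∑' y, mfun Eν Eε p q y ≤ Eε := by
  calc ∑' y, mfun Eν Eε p q y ≤ ∑' y, Eε * q y :=
        ENNReal.tsum_le_tsum (mfun_le hν hε1)
    _ = Eε := by rw [ENNReal.tsum_mul_left, q.tsum_coe, mul_one]

include hν hε1 hεt in
lemma tsum_mfun_ne_top : ∑' y, mfun Eν Eε p q y ≠ ⊤ :=
  ((tsum_mfun_le hν hε1).trans_lt (lt_top_iff_ne_top.mpr hεt)).ne

lemma le_tsum_mfun : Eν ≤ ∑' y, mfun Eν Eε p q y := by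
  calc Eν = ∑' y, Eν * q y := by rw [ENNReal.tsum_mul_left, q.tsum_coe, mul_one]
    _ ≤ ∑' y, mfun Eν Eε p q y := ENNReal.tsum_le_tsum (le_mfun)

include hν hε1 hεt in
lemma mfun_ne_top (y : Y) : mfun Eν Eε p q y ≠ ⊤ := by
  refine (lt_of_le_of_lt (mfun_le hν hε1 y) ?_).ne
  calc Eε * q y ≤ Eε * 1 := mul_le_mul_right (q.coe_le_one y) _
    _ < ⊤ := by rw [mul_one]; exact lt_top_iff_ne_top.mpr hεt

include hν hε1 hεt in
lemma le_adjust (y : Y) : Eν * q y ≤ adjust Eν Eε p q y := by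
  unfold adjust
  split_ifs with hT
  · exact (le_mfun y).trans le_self_add
  · set T := ∑' z, mfun Eν Eε p q z with hTdef
    have hc1 : (T - 1) / (T - Eν) ≤ 1 :=
      ENNReal.div_le_of_le_mul (by rw [one_mul]; exact tsub_le_tsub_left hν T)
    have h1 : (T - 1) / (T - Eν) * (mfun Eν Eε p q y - Eν * q y)
        ≤ mfun Eν Eε p q y - Eν * q y := by
      calc (T - 1) / (T - Eν) * (mfun Eν Eε p q y - Eν * q y)
          ≤ 1 * (mfun Eν Eε p q y - Eν * q y) := mul_le_mul_left hc1 _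
        _ = _ := one_mul _
    calc Eν * q y = mfun Eν Eε p q y - (mfun Eν Eε p q y - Eν * q y) :=
          (ENNReal.sub_sub_cancel (mfun_ne_top hν hε1 hεt y) (le_mfun y)).symm
      _ ≤ mfun Eν Eε p q y - (T - 1) / (T - Eν) * (mfun Eν Eε p q y - Eν * q y) :=
          tsub_le_tsub_left h1 _

include hν hε1 in
lemma adjust_le (y : Y) : adjust Eν Eε p q y ≤ Eε * q y := by
  unfold adjust
  split_ifs with hT
  · set T := ∑' z, mfun Eν Eε p q z with hTdef
    have hc1 : (1 - T) / (Eε - T) ≤ 1 :=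
      ENNReal.div_le_of_le_mul (by rw [one_mul]; exact tsub_le_tsub_right hε1.le T)
    calc mfun Eν Eε p q y + (1 - T) / (Eε - T) * (Eε * q y - mfun Eν Eε p q y)
        ≤ mfun Eν Eε p q y + 1 * (Eε * q y - mfun Eν Eε p q y) :=
          add_le_add_right (mul_le_mul_left hc1 _) _
      _ = Eε * q y := by rw [one_mul, add_comm, tsub_add_cancel_of_le (mfun_le hν hε1 y)]
  · exact tsub_le_self.trans (mfun_le hν hε1 y)

include hν hε1 hεt in
lemma adjust_sum : ∑' y, adjust Eν Eε p q y = 1 := by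
  unfold adjust
  set T := ∑' z, mfun Eν Eε p q z with hTdef
  have hTne : T ≠ ⊤ := tsum_mfun_ne_top hν hε1 hεt
  split_ifs with hT
  · have hsub : ∑' y, (Eε * q y - mfun Eν Eε p q y) = Eε - T := by
      rw [tsum_sub' hTne (mfun_le hν hε1)]
      congr 1
      rw [ENNReal.tsum_mul_left, q.tsum_coe, mul_one]
    have hne0 : Eε - T ≠ 0 := by
      rw [ne_eq, tsub_eq_zero_iff_le]
      exact not_le.mpr (lt_of_le_of_lt hT hε1)
    have hnet : Eε - T ≠ ⊤ := (tsub_le_self.trans_lt (lt_top_iff_ne_top.mpr hεt)).ne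
    rw [ENNReal.tsum_add, ENNReal.tsum_mul_left, hsub, ← hTdef,
      ENNReal.div_mul_cancel hne0 hnet, add_comm, tsub_add_cancel_of_le hT]
  · push_neg at hT
    have hsub : ∑' y, (mfun Eν Eε p q y - Eν * q y) = T - Eν := by
      rw [tsum_sub' ?_ le_mfun]
      · congr 1
        rw [ENNReal.tsum_mul_left, q.tsum_coe, mul_one]
      · rw [ENNReal.tsum_mul_left, q.tsum_coe, mul_one]
        exact (hν.trans_lt ENNReal.one_lt_top).ne
    have hne0 : T - Eν ≠ 0 := by
      rw [ne_eq, tsub_eq_zero_iff_le]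
      exact not_le.mpr (lt_of_le_of_lt hν hT)
    have hcle : ∀ y, (T - 1) / (T - Eν) * (mfun Eν Eε p q y - Eν * q y)
        ≤ mfun Eν Eε p q y := by
      intro y
      have hc1 : (T - 1) / (T - Eν) ≤ 1 :=
        ENNReal.div_le_of_le_mul (by rw [one_mul]; exact tsub_le_tsub_left hν T)
      calc (T - 1) / (T - Eν) * (mfun Eν Eε p q y - Eν * q y)
          ≤ 1 * (mfun Eν Eε p q y - Eν * q y) := mul_le_mul_left hc1 _
        _ ≤ mfun Eν Eε p q y := by rw [one_mul]; exact tsub_le_self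
    have hcsum : ∑' y, (T - 1) / (T - Eν) * (mfun Eν Eε p q y - Eν * q y) = T - 1 := by
      rw [ENNReal.tsum_mul_left, hsub,
        ENNReal.div_mul_cancel hne0 (tsub_le_self.trans_lt (lt_top_iff_ne_top.mpr hTne)).ne]
    rw [tsum_sub' (by rw [hcsum]; exact (tsub_le_self.trans_lt
      (lt_top_iff_ne_top.mpr hTne)).ne) hcle, hcsum, ← hTdef,
      ENNReal.sub_sub_cancel hTne hT.le]

include hν hε1 hεt in
lemma adjust_dev :
    (∑' y, (p y - adjust Eν Eε p q y) ≤ ∑' y, (p y - Eε * q y)) ∨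
    (∑' y, (adjust Eν Eε p q y - p y) ≤ ∑' y, (Eν * q y - p y)) := by
  unfold adjust
  split_ifs with hT
  · left
    refine ENNReal.tsum_le_tsum fun y => ?_
    calc p y - (mfun Eν Eε p q y + _) ≤ p y - mfun Eν Eε p q y :=
          tsub_le_tsub_left le_self_add _
      _ ≤ p y - min (p y) (Eε * q y) := tsub_le_tsub_left (le_max_right _ _) _
      _ = p y - Eε * q y := sub_min' _ _
  · right
    refine ENNReal.tsum_le_tsum fun y => ?_
    calc mfun Eν Eε p q y - _ - p y ≤ mfun Eν Eε p q y - p y :=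
          tsub_le_tsub_right tsub_le_self _
      _ ≤ max (Eν * q y) (p y) - p y :=
          tsub_le_tsub_right (max_le (le_max_left _ _)
            ((min_le_left _ _).trans (le_max_right _ _))) _
      _ = Eν * q y - p y := by rw [max_comm]; exact max_sub' _ _

end Adjust

/-- Pointwise density bounds give pure deletion LDP. -/
lemma pure_ldp_of_pointwise {p' q : PMF Y} {ε : ℝ}
    (hl : ∀ y, ENNReal.ofReal (Real.exp (-ε)) * q y ≤ p' y)
    (hu : ∀ y, (p' : Y → ℝ≥0∞) y ≤ ENNReal.ofReal (Real.exp ε) * q y) (S : Set Y) :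
    Real.exp (-ε) * (pr q S - 0) ≤ pr p' S ∧ pr p' S ≤ Real.exp ε * pr q S + 0 := by
  have hindmul : ∀ (c : ℝ≥0∞), ∑' y, S.indicator (fun y => c * q y) y
      = c * ∑' y, S.indicator q y := by
    intro c
    rw [← ENNReal.tsum_mul_left]
    refine tsum_congr fun y => ?_
    by_cases hy : y ∈ S <;> simp [Set.indicator_of_mem, Set.indicator_of_notMem, hy]
  have hqfin : ∀ (c : ℝ≥0∞), c ≠ ⊤ → c * ∑' y, S.indicator q y ≠ ⊤ := fun c hc =>
    ENNReal.mul_ne_top hc (tsum_ind_ne_top q S)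
  have hind : ∀ {f g : Y → ℝ≥0∞}, (∀ y, f y ≤ g y) →
      ∑' y, S.indicator f y ≤ ∑' y, S.indicator g y := by
    intro f g h
    refine ENNReal.tsum_le_tsum fun y => ?_
    by_cases hy : y ∈ S <;>
      simp [Set.indicator_of_mem, Set.indicator_of_notMem, hy, h y]
  constructor
  · rw [sub_zero]
    have h1 : ENNReal.ofReal (Real.exp (-ε)) * ∑' y, S.indicator q y
        ≤ ∑' y, S.indicator p' y := by
      rw [← hindmul]; exact hind hl
    calc Real.exp (-ε) * pr q S
        = (ENNReal.ofReal (Real.exp (-ε)) * ∑' y, S.indicator q y).toReal := by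
          rw [ENNReal.toReal_mul, ENNReal.toReal_ofReal (Real.exp_pos _).le, pr_eq]
      _ ≤ (∑' y, S.indicator p' y).toReal :=
          ENNReal.toReal_mono (tsum_ind_ne_top p' S) h1
      _ = pr p' S := (pr_eq p' S).symm
  · rw [add_zero]
    have h1 : ∑' y, S.indicator p' y
        ≤ ENNReal.ofReal (Real.exp ε) * ∑' y, S.indicator q y := by
      rw [← hindmul]; exact hind hu
    calc pr p' S = (∑' y, S.indicator p' y).toReal := pr_eq p' S
      _ ≤ (ENNReal.ofReal (Real.exp ε) * ∑' y, S.indicator q y).toReal :=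
          ENNReal.toReal_mono (hqfin _ ENNReal.ofReal_ne_top) h1
      _ = Real.exp ε * pr q S := by
          rw [ENNReal.toReal_mul, ENNReal.toReal_ofReal (Real.exp_pos _).le, pr_eq]

end DelLDPAux

/-- If `R` is a deletion `(ε, δ)`-LDP randomizer with reference distribution `R₀`, then
there exists `R'` such that (i) the total variation distance between `R(x)` and `R'(x)`
is at most `δ` for every `x` (i.e. `|Pr[R(x) ∈ S] - Pr[R'(x) ∈ S]| ≤ δ` for every `S`),
and (ii) `R'` is a deletion `(ε, 0)`-LDP randomizer with the same reference
distribution `R₀`. -/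
theorem approx_deletion_ldp_close_to_pure_deletion_ldp {X Y : Type*}
    (ε δ : ℝ) (hε : 0 < ε) (hδ0 : 0 ≤ δ) (hδ1 : δ ≤ 1)
    (R : X → PMF Y) (R₀ : PMF Y) (hR : IsDeletionLDPWith R R₀ ε δ) :
    ∃ R' : X → PMF Y,
      (∀ x : X, ∀ S : Set Y, |pr (R x) S - pr (R' x) S| ≤ δ) ∧
      IsDeletionLDPWith R' R₀ ε 0 := by
  classical
  set Eν : ℝ≥0∞ := ENNReal.ofReal (Real.exp (-ε)) with hEν
  set Eε : ℝ≥0∞ := ENNReal.ofReal (Real.exp ε) with hEε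
  have hν : Eν ≤ 1 := by
    rw [hEν, ← ENNReal.ofReal_one]
    exact ENNReal.ofReal_le_ofReal (Real.exp_le_one_iff.mpr (by linarith))
  have hε1 : (1 : ℝ≥0∞) < Eε := by
    rw [hEε, ← ENNReal.ofReal_one]
    refine (ENNReal.ofReal_lt_ofReal_iff (Real.exp_pos ε)).mpr ?_
    calc (1 : ℝ) = Real.exp 0 := Real.exp_zero.symm
      _ < Real.exp ε := Real.exp_lt_exp.mpr hε
  have hεt : Eε ≠ ⊤ := ENNReal.ofReal_ne_top
  refine ⟨fun x => ⟨DelLDPAux.adjust Eν Eε (R x) R₀,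
    ENNReal.summable.hasSum_iff.mpr (DelLDPAux.adjust_sum hν hε1 hεt)⟩, ?_, ?_⟩
  · intro x S
    rcases DelLDPAux.adjust_dev (p := R x) (q := R₀) hν hε1 hεt with h | h
    · exact DelLDPAux.tv_of_tsum_sub_le hδ0
        (h.trans (DelLDPAux.excess_le (fun S => (hR x S).2) hδ0)) S
    · rw [abs_sub_comm]
      exact DelLDPAux.tv_of_tsum_sub_le hδ0
        (h.trans (DelLDPAux.deficit_le (fun S => (hR x S).1) hδ0 hε)) S
  · intro x S
    exact DelLDPAux.pure_ldp_of_pointwise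
      (DelLDPAux.le_adjust hν hε1 hεt) (DelLDPAux.adjust_le hν hε1) S
end

section
/- Let 𝒴₁,…,𝒴ₙ be countable sets, let R₁,…,Rₙ be local randomizers with Rᵢ : 𝒳 → 𝒴ᵢ each satisfying ε-LDP, and let A : 𝒳ⁿ → 𝒴₁×⋯×𝒴ₙ be the algorithm A(X) = (R₁(x₁),…,Rₙ(xₙ)) with the Rᵢ applied independently. Let X, X' ∈ 𝒳ⁿ differ in at most k entries for some 1 ≤ k ≤ n. Then for every δ > 0, setting ε' = kε²/2 + ε·√(2k·ln(1/δ)), the probability under y ← A(X) that ln(Pr[A(X) = y]/Pr[A(X') = y]) > ε' is at most δ. In particular, for every set T ⊆ 𝒴₁×⋯×𝒴ₙ, Pr[A(X) ∈ T] ≤ e^{ε'}·Pr[A(X') ∈ T] + δ. -/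
open Real

-- generic: f 0 = 0, deriv nonneg on positives => f x ≥ 0 for x ≥ 0
private lemma nonneg_of_deriv (f : ℝ → ℝ) (hd : Differentiable ℝ f) (h0 : f 0 = 0)
    (hd' : ∀ x, 0 < x → 0 ≤ deriv f x) {x : ℝ} (hx : 0 ≤ x) : 0 ≤ f x := by
  have := monotoneOn_of_deriv_nonneg (convex_Ici 0) hd.continuous.continuousOn
    (fun y hy => (hd y).differentiableWithinAt)
    (fun y hy => hd' y (by simpa [interior_Ici] using hy))
  have h := this (Set.self_mem_Ici) (by exact hx) hx
  simpa [h0] using h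

private lemma sinh_le_mul_cosh {x : ℝ} (hx : 0 ≤ x) : Real.sinh x ≤ x * Real.cosh x := by
  have := nonneg_of_deriv (fun x => x * Real.cosh x - Real.sinh x)
    (by fun_prop) (by simp)
    (fun y hy => by
      have : deriv (fun x => x * Real.cosh x - Real.sinh x) y = y * Real.sinh y := by
        have h1 : HasDerivAt (fun x : ℝ => x * Real.cosh x - Real.sinh x)
            (1 * Real.cosh y + y * Real.sinh y - Real.cosh y) y := by
          exact ((hasDerivAt_id y).mul (Real.hasDerivAt_cosh y)).sub (Real.hasDerivAt_sinh y)
        rw [h1.deriv]; ring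
      rw [this]
      positivity)
    hx
  simpa using this

private lemma cosh_sub_one_le {x : ℝ} (hx : 0 ≤ x) : Real.cosh x - 1 ≤ x / 2 * Real.sinh x := by
  have := nonneg_of_deriv (fun x => x / 2 * Real.sinh x - Real.cosh x + 1)
    (by fun_prop) (by simp)
    (fun y hy => by
      have h1 : HasDerivAt (fun x : ℝ => x / 2 * Real.sinh x - Real.cosh x + 1)
          ((1/2) * Real.sinh y + y / 2 * Real.cosh y - Real.sinh y) y := by
        exact (((((hasDerivAt_id y).div_const 2).mul (Real.hasDerivAt_sinh y)).sub
          (Real.hasDerivAt_cosh y)).add_const 1)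
      rw [h1.deriv]
      have := sinh_le_mul_cosh hy.le
      linarith)
    hx
  linarith

-- chord bound: for r ∈ [−ε,ε], exp(l*r) + μ exp(−r) ≤ exp(l*ε) + μ exp(−ε), μ = sinh(lε)/sinh(ε)
private lemma chord_bound {ε l r : ℝ} (hε : 0 < ε) (hl : 0 ≤ l) (hr : r ∈ Set.Icc (-ε) ε) :
    Real.exp (l * r) + (Real.sinh (l * ε) / Real.sinh ε) * Real.exp (-r)
      ≤ Real.exp (l * ε) + (Real.sinh (l * ε) / Real.sinh ε) * Real.exp (-ε) := by
  set μ := Real.sinh (l * ε) / Real.sinh ε with hμ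
  have hμ0 : 0 ≤ μ := div_nonneg (Real.sinh_nonneg_iff.2 (by positivity)) (Real.sinh_nonneg_iff.2 hε.le)
  set θ := (r + ε) / (2 * ε) with hθ
  have hθ0 : 0 ≤ θ := div_nonneg (by linarith [hr.1]) (by linarith)
  have hθ1 : θ ≤ 1 := by
    rw [hθ, div_le_one (by linarith)]; linarith [hr.2]
  have hsum : θ + (1 - θ) = 1 := by ring
  have hrc : r = θ * ε + (1 - θ) * (-ε) := by
    have h2 : θ * (2 * ε) = r + ε := by
      rw [hθ]; exact div_mul_cancel₀ _ (ne_of_gt (by linarith))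
    linear_combination -h2
  have h1 : Real.exp (l * r) ≤ θ * Real.exp (l * ε) + (1 - θ) * Real.exp (l * (-ε)) := by
    have := convexOn_exp.2 (Set.mem_univ (l * ε)) (Set.mem_univ (l * (-ε))) hθ0 (by linarith) hsum
    simpa [smul_eq_mul, hrc, mul_add, mul_comm, mul_left_comm, mul_assoc] using this
  have h2 : Real.exp (-r) ≤ θ * Real.exp (-ε) + (1 - θ) * Real.exp ε := by
    have := convexOn_exp.2 (Set.mem_univ (-ε)) (Set.mem_univ ε) hθ0 (by linarith) hsum
    have hr' : -r = θ * (-ε) + (1 - θ) * ε := by rw [hrc]; ring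
    simpa [smul_eq_mul, hr'] using this
  have key : Real.exp (l * (-ε)) + μ * Real.exp ε = Real.exp (l * ε) + μ * Real.exp (-ε) := by
    have hd : Real.exp (-ε) < Real.exp ε := Real.exp_lt_exp.2 (by linarith)
    have hd' : Real.exp ε - Real.exp (-ε) ≠ 0 := sub_ne_zero.2 hd.ne'
    rw [hμ, Real.sinh_eq, Real.sinh_eq]
    field_simp
    ring
  calc Real.exp (l * r) + μ * Real.exp (-r)
      ≤ (θ * Real.exp (l * ε) + (1 - θ) * Real.exp (l * (-ε)))
        + μ * (θ * Real.exp (-ε) + (1 - θ) * Real.exp ε) := by nlinarith [h1, h2, hμ0]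
    _ = θ * (Real.exp (l * ε) + μ * Real.exp (-ε))
        + (1 - θ) * (Real.exp (l * (-ε)) + μ * Real.exp ε) := by ring
    _ = Real.exp (l * ε) + μ * Real.exp (-ε) := by rw [key]; ring

-- final analytic bound : C - μ ≤ exp(l ε²/2 + l² ε²/2)
private lemma mgf_bound {ε l : ℝ} (hε : 0 < ε) (hl : 0 ≤ l) :
    Real.exp (l * ε) - (Real.sinh (l * ε) / Real.sinh ε) * (1 - Real.exp (-ε))
      ≤ Real.exp (l * ε ^ 2 / 2 + l ^ 2 * ε ^ 2 / 2) := by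
  have hs : 0 < Real.sinh ε := Real.sinh_pos_iff.2 hε
  set u := l * ε with hu
  have hu0 : 0 ≤ u := by positivity
  have heq : Real.exp u - (Real.sinh u / Real.sinh ε) * (1 - Real.exp (-ε))
      = Real.cosh u + Real.sinh u * ((Real.cosh ε - 1) / Real.sinh ε) := by
    have hd : Real.exp (-ε) < Real.exp ε := Real.exp_lt_exp.2 (by linarith)
    have hd' : Real.exp ε - Real.exp (-ε) ≠ 0 := sub_ne_zero.2 hd.ne'
    simp only [Real.cosh_eq, Real.sinh_eq]
    field_simp
    ring
  rw [heq]
  have hsu : 0 ≤ Real.sinh u := Real.sinh_nonneg_iff.2 hu0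
  have hstep1 : (Real.cosh ε - 1) / Real.sinh ε ≤ ε / 2 := by
    rw [div_le_iff₀ hs]
    have := cosh_sub_one_le hε.le
    nlinarith [Real.sinh_nonneg_iff.2 hε.le]
  have hcosh := Real.cosh_le_exp_half_sq u
  have hsinh : Real.sinh u ≤ u * Real.exp (u ^ 2 / 2) :=
    le_trans (sinh_le_mul_cosh hu0) (by nlinarith [Real.cosh_le_exp_half_sq u, hu0])
  have h3 : Real.cosh u + Real.sinh u * ((Real.cosh ε - 1) / Real.sinh ε)
      ≤ (1 + l * ε ^ 2 / 2) * Real.exp (u ^ 2 / 2) := by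
    have : Real.sinh u * ((Real.cosh ε - 1) / Real.sinh ε) ≤ Real.sinh u * (ε / 2) :=
      mul_le_mul_of_nonneg_left hstep1 hsu
    have h4 : Real.sinh u * (ε / 2) ≤ (l * ε ^ 2 / 2) * Real.exp (u ^ 2 / 2) := by
      calc Real.sinh u * (ε / 2) ≤ (u * Real.exp (u ^ 2 / 2)) * (ε / 2) := by
            apply mul_le_mul_of_nonneg_right hsinh (by linarith)
        _ = (l * ε ^ 2 / 2) * Real.exp (u ^ 2 / 2) := by rw [hu]; ring
    linarith
  have h5 : (1 + l * ε ^ 2 / 2) * Real.exp (u ^ 2 / 2)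
      ≤ Real.exp (l * ε ^ 2 / 2) * Real.exp (u ^ 2 / 2) := by
    apply mul_le_mul_of_nonneg_right _ (Real.exp_nonneg _)
    have := Real.add_one_le_exp (l * ε ^ 2 / 2)
    linarith
  calc _ ≤ (1 + l * ε ^ 2 / 2) * Real.exp (u ^ 2 / 2) := h3
    _ ≤ Real.exp (l * ε ^ 2 / 2) * Real.exp (u ^ 2 / 2) := h5
    _ = Real.exp (l * ε ^ 2 / 2 + l ^ 2 * ε ^ 2 / 2) := by
        rw [← Real.exp_add]; congr 1; rw [hu]; ring

open scoped ENNReal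

private lemma coord_mgf {Z : Type*} {ε l : ℝ} (hε : 0 < ε) (hl : 0 ≤ l)
    (p q : PMF Z)
    (hpq : ∀ z, p z ≤ ENNReal.ofReal (Real.exp ε) * q z)
    (hqp : ∀ z, q z ≤ ENNReal.ofReal (Real.exp ε) * p z) :
    ∑' z, p z * ENNReal.ofReal (Real.exp (l * Real.log ((p z).toReal / (q z).toReal)))
      ≤ ENNReal.ofReal (Real.exp (l * ε ^ 2 / 2 + l ^ 2 * ε ^ 2 / 2)) := by
  set f : Z → ℝ := fun z => (p z).toReal with hfdef
  set g : Z → ℝ := fun z => (q z).toReal with hgdef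
  have hf0 : ∀ z, 0 ≤ f z := fun z => ENNReal.toReal_nonneg
  have hg0 : ∀ z, 0 ≤ g z := fun z => ENNReal.toReal_nonneg
  have hfsum : Summable f := ENNReal.summable_toReal p.tsum_coe_ne_top
  have hgsum : Summable g := ENNReal.summable_toReal q.tsum_coe_ne_top
  have hftsum : ∑' z, f z = 1 := by
    rw [hfdef, ← ENNReal.tsum_toReal_eq (fun z => p.apply_ne_top z), p.tsum_coe, ENNReal.toReal_one]
  have hgtsum : ∑' z, g z = 1 := by
    rw [hgdef, ← ENNReal.tsum_toReal_eq (fun z => q.apply_ne_top z), q.tsum_coe, ENNReal.toReal_one]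
  set μ := Real.sinh (l * ε) / Real.sinh ε with hμ
  have hμ0 : 0 ≤ μ :=
    div_nonneg (Real.sinh_nonneg_iff.2 (by positivity)) (Real.sinh_nonneg_iff.2 hε.le)
  set C := Real.exp (l * ε) + μ * Real.exp (-ε) with hC
  set term : Z → ℝ := fun z => f z * Real.exp (l * Real.log (f z / g z)) with hterm
  have hterm0 : ∀ z, 0 ≤ term z := fun z => mul_nonneg (hf0 z) (Real.exp_nonneg _)
  -- pointwise inequality
  have hpw : ∀ z, term z ≤ C * f z - μ * g z := by
    intro z
    by_cases hz : p z = 0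
    · have hq : q z = 0 := by
        have := hqp z; rw [hz, mul_zero] at this; exact le_antisymm this (zero_le)
      simp [hterm, hfdef, hgdef, hz, hq]
    · have hfz : 0 < f z := ENNReal.toReal_pos hz (p.apply_ne_top z)
      have hqz : q z ≠ 0 := by
        intro h; apply hz
        have := hpq z; rw [h, mul_zero] at this; exact le_antisymm this (zero_le)
      have hgz : 0 < g z := ENNReal.toReal_pos hqz (q.apply_ne_top z)
      have hfg : f z ≤ Real.exp ε * g z := by
        have h := hpq z
        have h2 := ENNReal.toReal_mono (by
          exact ENNReal.mul_ne_top ENNReal.ofReal_ne_top (q.apply_ne_top z)) h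
        rwa [ENNReal.toReal_mul, ENNReal.toReal_ofReal (Real.exp_nonneg _)] at h2
      have hgf : g z ≤ Real.exp ε * f z := by
        have h := hqp z
        have h2 := ENNReal.toReal_mono (by
          exact ENNReal.mul_ne_top ENNReal.ofReal_ne_top (p.apply_ne_top z)) h
        rwa [ENNReal.toReal_mul, ENNReal.toReal_ofReal (Real.exp_nonneg _)] at h2
      set r := Real.log (f z / g z) with hrd
      have hratio : 0 < f z / g z := div_pos hfz hgz
      have hr1 : r ≤ ε := by
        rw [hrd, Real.log_le_iff_le_exp hratio, div_le_iff₀ hgz]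
        exact hfg
      have hr2 : -ε ≤ r := by
        rw [hrd, Real.le_log_iff_exp_le hratio, le_div_iff₀ hgz]
        have h1 : Real.exp (-ε) * Real.exp ε = 1 := by rw [← Real.exp_add]; simp
        nlinarith [Real.exp_pos (-ε), hgf]
      have hchord := chord_bound hε hl ⟨hr2, hr1⟩
      have hexpneg : Real.exp (-r) = g z / f z := by
        rw [Real.exp_neg, hrd, Real.exp_log hratio, inv_div]
      have := mul_le_mul_of_nonneg_left hchord hfz.le
      rw [mul_add, hexpneg] at this
      have heq : f z * (μ * (g z / f z)) = μ * g z := by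
        field_simp
      rw [heq] at this
      have : term z + μ * g z ≤ f z * C := by
        rw [hterm]
        calc f z * Real.exp (l * r) + μ * g z
            ≤ f z * (Real.exp (l * ε) + μ * Real.exp (-ε)) := this
          _ = f z * C := by rw [hC]
      linarith
  have hmaj : Summable (fun z => C * f z - μ * g z) :=
    (hfsum.mul_left C).sub (hgsum.mul_left μ)
  have htermsum : Summable term :=
    Summable.of_nonneg_of_le hterm0 hpw hmaj
  have hsumle : ∑' z, term z ≤ C - μ := by
    calc ∑' z, term z ≤ ∑' z, (C * f z - μ * g z) := Summable.tsum_le_tsum hpw htermsum hmaj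
      _ = C * ∑' z, f z - μ * ∑' z, g z := by
          rw [Summable.tsum_sub (hfsum.mul_left C) (hgsum.mul_left μ), tsum_mul_left, tsum_mul_left]
      _ = C - μ := by rw [hftsum, hgtsum]; ring
  have hfinal : C - μ ≤ Real.exp (l * ε ^ 2 / 2 + l ^ 2 * ε ^ 2 / 2) := by
    have h := mgf_bound hε hl (ε := ε) (l := l)
    have heq2 : C - μ = Real.exp (l * ε) - μ * (1 - Real.exp (-ε)) := by rw [hC]; ring
    rw [heq2, hμ]
    exact h
  calc ∑' z, p z * ENNReal.ofReal (Real.exp (l * Real.log ((p z).toReal / (q z).toReal)))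
      = ∑' z, ENNReal.ofReal (term z) := by
        apply tsum_congr; intro z
        simp only [hterm, hfdef, hgdef]
        rw [ENNReal.ofReal_mul ENNReal.toReal_nonneg,
          ENNReal.ofReal_toReal (p.apply_ne_top z)]
    _ = ENNReal.ofReal (∑' z, term z) := (ENNReal.ofReal_tsum_of_nonneg hterm0 htermsum).symm
    _ ≤ ENNReal.ofReal (Real.exp (l * ε ^ 2 / 2 + l ^ 2 * ε ^ 2 / 2)) :=
        ENNReal.ofReal_le_ofReal (le_trans hsumle hfinal)

private lemma tsum_pi_prod : ∀ {n : ℕ} {Y : Fin n → Type*} (h : ∀ i, Y i → ℝ≥0∞),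
    ∑' y : ∀ i, Y i, ∏ i, h i (y i) = ∏ i, ∑' z, h i z := by
  intro n
  induction n with
  | zero =>
    intro Y h
    rw [tsum_eq_single (fun i => i.elim0) (fun b hb => absurd (Subsingleton.elim b _) hb)]
    simp
  | succ m ih =>
    intro Y h
    rw [← (Fin.consEquiv Y).tsum_eq]
    have : ∀ x : Y 0 × (∀ i : Fin m, Y i.succ),
        ∏ i, h i ((Fin.consEquiv Y) x i) = h 0 x.1 * ∏ i : Fin m, h i.succ (x.2 i) := by
      intro x
      rw [Fin.prod_univ_succ]
      simp [Fin.consEquiv]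
    rw [tsum_congr this,
      ENNReal.tsum_prod (f := fun (a : Y 0) (b : ∀ i : Fin m, Y i.succ) =>
        h 0 a * ∏ i : Fin m, h i.succ (b i))]
    simp_rw [ENNReal.tsum_mul_left, ENNReal.tsum_mul_right]
    rw [ih, Fin.prod_univ_succ]

/-- Advanced grouposition for pure LDP: let `R₁, …, Rₙ` be `ε`-LDP local randomizers and
`A(X) = (R₁(x₁), …, Rₙ(xₙ))` (independent outputs, so `A(X)` is the product distribution,
whose value at `y` is `P X y = ∏ i, Pr[Rᵢ(xᵢ) = yᵢ]`). If `X₁, X₂ ∈ 𝒳ⁿ` differ in at most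
`k` entries, then for every `δ > 0`, with `ε' = kε²/2 + ε√(2k ln(1/δ))`, the probability
under `y ← A(X₁)` that `ln(Pr[A(X₁) = y]/Pr[A(X₂) = y]) > ε'` is at most `δ`; in
particular, for every `T`, `Pr[A(X₁) ∈ T] ≤ e^{ε'} Pr[A(X₂) ∈ T] + δ`. -/
theorem advanced_grouposition_pure_ldp {X : Type*} {n : ℕ} {Y : Fin n → Type*}
    [∀ i, Countable (Y i)]
    (ε : ℝ) (R : (i : Fin n) → X → PMF (Y i))
    (hR : ∀ (i : Fin n) (x x' : X) (S : Set (Y i)),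
      (R i x).toOuterMeasure S ≤ ENNReal.ofReal (Real.exp ε) * (R i x').toOuterMeasure S)
    (k : ℕ) (hk1 : 1 ≤ k) (hkn : k ≤ n)
    (X₁ X₂ : Fin n → X) (hdiff : {i | X₁ i ≠ X₂ i}.ncard ≤ k)
    (δ : ℝ) (hδ : 0 < δ) :
    let P : (Fin n → X) → (∀ i, Y i) → ℝ≥0∞ := fun Z y => ∏ i, R i (Z i) (y i)
    let ε' : ℝ := k * ε ^ 2 / 2 + ε * Real.sqrt (2 * k * Real.log (1 / δ))
    (∑' y : ∀ i, Y i,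
        {y : ∀ i, Y i |
          Real.log ((P X₁ y).toReal / (P X₂ y).toReal) > ε'}.indicator (P X₁) y)
      ≤ ENNReal.ofReal δ ∧
    ∀ T : Set (∀ i, Y i),
      (∑' y : ∀ i, Y i, T.indicator (P X₁) y) ≤
        ENNReal.ofReal (Real.exp ε') * (∑' y : ∀ i, Y i, T.indicator (P X₂) y)
          + ENNReal.ofReal δ := by
  intro P ε'
  -- basic facts
  have hn : 0 < n := lt_of_lt_of_le hk1 hkn
  have hk0 : (0:ℝ) < (k:ℝ) := by exact_mod_cast hk1
  -- pointwise LDP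
  have h1 : ∀ (i : Fin n) (x x' : X) (z : Y i),
      R i x z ≤ ENNReal.ofReal (Real.exp ε) * R i x' z := by
    intro i x x' z
    have := hR i x x' {z}
    rwa [PMF.toOuterMeasure_apply_singleton, PMF.toOuterMeasure_apply_singleton] at this
  -- ε ≥ 0
  have hε0 : 0 ≤ ε := by
    have := hR ⟨0, hn⟩ (X₁ ⟨0, hn⟩) (X₁ ⟨0, hn⟩) Set.univ
    rw [PMF.toOuterMeasure_apply] at this
    simp only [Set.indicator_univ, PMF.tsum_coe, mul_one] at this
    have h2 : (1:ℝ) ≤ Real.exp ε := by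
      by_contra h
      push_neg at h
      have : ENNReal.ofReal (Real.exp ε) < 1 := by
        rw [← ENNReal.ofReal_one]
        exact ENNReal.ofReal_lt_ofReal_iff_of_nonneg (Real.exp_nonneg ε) |>.2 h
      exact absurd (lt_of_le_of_lt ‹(1:ℝ≥0∞) ≤ _› this) (lt_irrefl _)
    rwa [← Real.exp_zero, Real.exp_le_exp] at h2
  have hε'0 : 0 ≤ ε' := by
    have : 0 ≤ Real.sqrt (2 * k * Real.log (1 / δ)) := Real.sqrt_nonneg _
    have h2 : (0:ℝ) ≤ k * ε ^ 2 / 2 := by positivity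
    have h3 : (0:ℝ) ≤ ε * Real.sqrt (2 * k * Real.log (1 / δ)) := by positivity
    simp only [ε']; linarith
  set B : Set (∀ i, Y i) :=
    {y | Real.log ((P X₁ y).toReal / (P X₂ y).toReal) > ε'} with hB
  -- P is finite and products
  have hPne : ∀ (Z : Fin n → X) (y : ∀ i, Y i), P Z y ≠ ⊤ := by
    intro Z y
    exact ENNReal.prod_ne_top (fun i _ => PMF.apply_ne_top _ _)
  have hPdef : ∀ Z y, P Z y = ∏ i, R i (Z i) (y i) := fun _ _ => rfl
  have hε'def : ε' = (k:ℝ) * ε ^ 2 / 2 + ε * Real.sqrt (2 * k * Real.log (1 / δ)) := rfl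
  have part1 : (∑' y : ∀ i, Y i, B.indicator (P X₁) y) ≤ ENNReal.ofReal δ := by
    by_cases hδ1 : (1:ℝ) ≤ δ
    · calc (∑' y, B.indicator (P X₁) y) ≤ ∑' y, P X₁ y :=
          ENNReal.tsum_le_tsum (fun y => Set.indicator_le_self _ _ y)
        _ = ∏ i, ∑' z, R i (X₁ i) z := tsum_pi_prod _
        _ = 1 := by simp [PMF.tsum_coe]
        _ ≤ ENNReal.ofReal δ := by
            rw [← ENNReal.ofReal_one]; exact ENNReal.ofReal_le_ofReal hδ1
    push_neg at hδ1
    by_cases hεz : ε = 0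
    · have hpq : ∀ (i : Fin n) z, R i (X₁ i) z = R i (X₂ i) z := by
        intro i z
        have ha := h1 i (X₁ i) (X₂ i) z
        have hb := h1 i (X₂ i) (X₁ i) z
        rw [hεz, Real.exp_zero, ENNReal.ofReal_one, one_mul] at ha hb
        exact le_antisymm ha hb
      have hPP : ∀ y, P X₁ y = P X₂ y := fun y =>
        Finset.prod_congr rfl (fun i _ => hpq i (y i))
      have hBempty : ∀ y, y ∉ B := by
        intro y hy
        rw [hB] at hy
        simp only [Set.mem_setOf_eq, hPP y] at hy
        rcases eq_or_ne ((P X₂ y).toReal) 0 with h|h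
        · rw [h, div_zero, Real.log_zero] at hy; linarith [hε'0]
        · rw [div_self h, Real.log_one] at hy; linarith [hε'0]
      calc (∑' y, B.indicator (P X₁) y) = ∑' y : ∀ i, Y i, (0:ℝ≥0∞) :=
            tsum_congr (fun y => Set.indicator_of_notMem (hBempty y) _)
        _ = 0 := tsum_zero
        _ ≤ _ := zero_le
    · have hε : 0 < ε := lt_of_le_of_ne hε0 (Ne.symm hεz)
      have hlogδ : 0 < Real.log (1 / δ) := Real.log_pos ((one_lt_div hδ).2 hδ1)
      set s := Real.sqrt (2 * k * Real.log (1 / δ)) with hsdef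
      have hs2 : s ^ 2 = 2 * k * Real.log (1 / δ) := Real.sq_sqrt (by positivity)
      have hs : 0 < s := Real.sqrt_pos.2 (by positivity)
      set l := s / (k * ε) with hldef
      have hl : 0 < l := by positivity
      set E := l * ε ^ 2 / 2 + l ^ 2 * ε ^ 2 / 2 with hEdef
      have hE0 : 0 ≤ E := by positivity
      set ll : (i : Fin n) → Y i → ℝ := fun i z =>
        Real.log ((R i (X₁ i) z).toReal / (R i (X₂ i) z).toReal) with hlldef
      set h : (i : Fin n) → Y i → ℝ≥0∞ := fun i z =>
        R i (X₁ i) z * ENNReal.ofReal (Real.exp (l * ll i z)) with hhdef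
      -- pointwise Chernoff bound
      have step1 : ∀ y, B.indicator (P X₁) y ≤
          ENNReal.ofReal (Real.exp (-(l * ε'))) * ∏ i, h i (y i) := by
        intro y
        by_cases hyB : y ∈ B
        swap
        · rw [Set.indicator_of_notMem hyB]; exact zero_le
        rw [Set.indicator_of_mem hyB]
        by_cases hy0 : ∀ i, R i (X₁ i) (y i) ≠ 0
        swap
        · push_neg at hy0
          obtain ⟨i, hi⟩ := hy0
          rw [hPdef, Finset.prod_eq_zero (Finset.mem_univ i) hi]
          exact zero_le
        have hq0 : ∀ i, R i (X₂ i) (y i) ≠ 0 := by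
          intro i hi
          have := h1 i (X₁ i) (X₂ i) (y i)
          rw [hi, mul_zero] at this
          exact hy0 i (le_antisymm this (zero_le))
        have hfi : ∀ i, 0 < (R i (X₁ i) (y i)).toReal :=
          fun i => ENNReal.toReal_pos (hy0 i) (PMF.apply_ne_top _ _)
        have hgi : ∀ i, 0 < (R i (X₂ i) (y i)).toReal :=
          fun i => ENNReal.toReal_pos (hq0 i) (PMF.apply_ne_top _ _)
        have hsumlog : ∑ i, ll i (y i) =
            Real.log ((P X₁ y).toReal / (P X₂ y).toReal) := by
          rw [hPdef, hPdef, ENNReal.toReal_prod, ENNReal.toReal_prod]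
          rw [Real.log_div (Finset.prod_ne_zero_iff.2 fun i _ => (hfi i).ne')
            (Finset.prod_ne_zero_iff.2 fun i _ => (hgi i).ne')]
          rw [Real.log_prod (fun i _ => (hfi i).ne'),
            Real.log_prod (fun i _ => (hgi i).ne'), ← Finset.sum_sub_distrib]
          refine Finset.sum_congr rfl (fun i _ => ?_)
          simp only [hlldef]
          exact Real.log_div (hfi i).ne' (hgi i).ne'
        have hprod : ∏ i, h i (y i) = P X₁ y *
            ENNReal.ofReal (Real.exp (l * Real.log ((P X₁ y).toReal / (P X₂ y).toReal))) := by
          rw [hhdef]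
          rw [Finset.prod_mul_distrib, ← hPdef]
          congr 1
          rw [← ENNReal.ofReal_prod_of_nonneg (fun i _ => Real.exp_nonneg _), ← Real.exp_sum]
          rw [← Finset.mul_sum, hsumlog]
        rw [hprod, ← mul_assoc, mul_comm (ENNReal.ofReal _) (P X₁ y), mul_assoc,
          ← ENNReal.ofReal_mul (Real.exp_nonneg _), ← Real.exp_add]
        have hL : Real.log ((P X₁ y).toReal / (P X₂ y).toReal) > ε' := hyB
        have hone : (1:ℝ≥0∞) ≤ ENNReal.ofReal
            (Real.exp (-(l * ε') + l * Real.log ((P X₁ y).toReal / (P X₂ y).toReal))) := by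
          rw [ENNReal.one_le_ofReal]
          apply Real.one_le_exp
          nlinarith
        calc P X₁ y = P X₁ y * 1 := (mul_one _).symm
          _ ≤ _ := mul_le_mul_right hone _
      -- per-coordinate bounds
      have hMsame : ∀ i, X₁ i = X₂ i → ∑' z, h i z = 1 := by
        intro i hi
        have : ∀ z, h i z = R i (X₁ i) z := by
          intro z
          rw [hhdef]
          simp only [hlldef, hi]
          rcases eq_or_ne ((R i (X₂ i) z).toReal) 0 with h'|h'
          · rw [h', div_zero, Real.log_zero, mul_zero, Real.exp_zero,
              ENNReal.ofReal_one, mul_one]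
          · rw [div_self h', Real.log_one, mul_zero, Real.exp_zero,
              ENNReal.ofReal_one, mul_one]
        rw [tsum_congr this, PMF.tsum_coe]
      have hMdiff : ∀ i, ∑' z, h i z ≤ ENNReal.ofReal (Real.exp E) := by
        intro i
        have := coord_mgf hε hl.le (R i (X₁ i)) (R i (X₂ i))
          (fun z => h1 i (X₁ i) (X₂ i) z) (fun z => h1 i (X₂ i) (X₁ i) z)
        rw [hhdef, hEdef]
        exact this
      -- product bound
      classical
      set D : Finset (Fin n) := Finset.univ.filter (fun i => X₁ i ≠ X₂ i) with hDdef
      have hcard : D.card ≤ k := by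
        have hset : {i | X₁ i ≠ X₂ i} = ↑D := by
          ext i; simp [hDdef]
        rwa [hset, Set.ncard_coe_finset] at hdiff
      have hprodbd : ∏ i, ∑' z, h i z ≤ ENNReal.ofReal (Real.exp ((k:ℝ) * E)) := by
        rw [← Finset.prod_filter_mul_prod_filter_not Finset.univ (fun i => X₁ i ≠ X₂ i)]
        have h2 : ∏ i ∈ Finset.univ.filter (fun i => ¬X₁ i ≠ X₂ i), ∑' z, h i z = 1 := by
          apply Finset.prod_eq_one
          intro i hi
          simp only [Finset.mem_filter, not_not] at hi
          exact hMsame i hi.2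
        rw [h2, mul_one]
        calc ∏ i ∈ D, ∑' z, h i z ≤ ∏ _i ∈ D, ENNReal.ofReal (Real.exp E) :=
              Finset.prod_le_prod' (fun i _ => hMdiff i)
          _ = ENNReal.ofReal (Real.exp E) ^ D.card := Finset.prod_const _
          _ = ENNReal.ofReal (Real.exp E ^ D.card) :=
              (ENNReal.ofReal_pow (Real.exp_nonneg _) _).symm
          _ = ENNReal.ofReal (Real.exp ((D.card : ℝ) * E)) := by rw [Real.exp_nat_mul]
          _ ≤ ENNReal.ofReal (Real.exp ((k:ℝ) * E)) := by
              apply ENNReal.ofReal_le_ofReal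
              apply Real.exp_le_exp.2
              have : (D.card : ℝ) ≤ (k : ℝ) := by exact_mod_cast hcard
              nlinarith
      -- key exponent algebra
      have hkey : -(l * ε') + k * E = Real.log δ := by
        have hstep : -(l * ε') + k * E = -(s ^ 2) / (2 * k) := by
          rw [hε'def, hEdef, hldef]
          field_simp
          ring
        rw [hstep, hs2]
        rw [one_div, Real.log_inv]
        field_simp
      calc (∑' y, B.indicator (P X₁) y)
          ≤ ∑' y, ENNReal.ofReal (Real.exp (-(l * ε'))) * ∏ i, h i (y i) :=
            ENNReal.tsum_le_tsum step1
        _ = ENNReal.ofReal (Real.exp (-(l * ε'))) * ∑' y : ∀ i, Y i, ∏ i, h i (y i) :=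
            ENNReal.tsum_mul_left
        _ = ENNReal.ofReal (Real.exp (-(l * ε'))) * ∏ i, ∑' z, h i z := by
            rw [tsum_pi_prod]
        _ ≤ ENNReal.ofReal (Real.exp (-(l * ε'))) * ENNReal.ofReal (Real.exp ((k:ℝ) * E)) :=
            mul_le_mul_right hprodbd _
        _ = ENNReal.ofReal (Real.exp (-(l * ε') + (k:ℝ) * E)) := by
            rw [← ENNReal.ofReal_mul (Real.exp_nonneg _), ← Real.exp_add]
        _ = ENNReal.ofReal δ := by rw [hkey, Real.exp_log hδ]
  refine ⟨part1, ?_⟩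
  -- part 2 from part 1
  have hBc : ∀ y ∉ B, P X₁ y ≤ ENNReal.ofReal (Real.exp ε') * P X₂ y := by
    intro y hy
    by_cases h0 : P X₁ y = 0
    · rw [h0]; exact zero_le
    · have hpi : ∀ i, R i (X₁ i) (y i) ≠ 0 := by
        intro i hi
        exact h0 (Finset.prod_eq_zero (Finset.mem_univ i) hi)
      have hqi : ∀ i, R i (X₂ i) (y i) ≠ 0 := by
        intro i hi
        have := h1 i (X₁ i) (X₂ i) (y i)
        rw [hi, mul_zero] at this
        exact hpi i (le_antisymm this (zero_le))
      have hP2 : P X₂ y ≠ 0 := Finset.prod_ne_zero_iff.2 (fun i _ => hqi i)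
      have ht1 : 0 < (P X₁ y).toReal := ENNReal.toReal_pos h0 (hPne _ y)
      have ht2 : 0 < (P X₂ y).toReal := ENNReal.toReal_pos hP2 (hPne _ y)
      have hlog : Real.log ((P X₁ y).toReal / (P X₂ y).toReal) ≤ ε' := not_lt.1 hy
      have hratio : (P X₁ y).toReal / (P X₂ y).toReal ≤ Real.exp ε' := by
        rw [← Real.exp_log (div_pos ht1 ht2)]
        exact Real.exp_le_exp.2 hlog
      have hreal : (P X₁ y).toReal ≤ Real.exp ε' * (P X₂ y).toReal := by
        rw [div_le_iff₀ ht2] at hratio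
        linarith
      calc P X₁ y = ENNReal.ofReal (P X₁ y).toReal := (ENNReal.ofReal_toReal (hPne _ y)).symm
        _ ≤ ENNReal.ofReal (Real.exp ε' * (P X₂ y).toReal) := ENNReal.ofReal_le_ofReal hreal
        _ = ENNReal.ofReal (Real.exp ε') * ENNReal.ofReal (P X₂ y).toReal := by
            rw [ENNReal.ofReal_mul (Real.exp_nonneg _)]
        _ = ENNReal.ofReal (Real.exp ε') * P X₂ y := by
            rw [ENNReal.ofReal_toReal (hPne _ y)]
  intro T
  have hsplit : ∀ y, T.indicator (P X₁) y ≤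
      (T ∩ Bᶜ).indicator (P X₁) y + B.indicator (P X₁) y := by
    intro y
    by_cases hyB : y ∈ B
    · calc T.indicator (P X₁) y ≤ P X₁ y := Set.indicator_le_self _ _ y
        _ ≤ _ := by rw [Set.indicator_of_mem hyB]; exact le_add_self
    · by_cases hyT : y ∈ T
      · rw [Set.indicator_of_mem hyT, Set.indicator_of_mem (Set.mem_inter hyT hyB)]
        exact le_add_right le_rfl
      · rw [Set.indicator_of_notMem hyT]
        exact zero_le
  calc (∑' y, T.indicator (P X₁) y)
      ≤ ∑' y, ((T ∩ Bᶜ).indicator (P X₁) y + B.indicator (P X₁) y) :=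
        ENNReal.tsum_le_tsum hsplit
    _ = (∑' y, (T ∩ Bᶜ).indicator (P X₁) y) + ∑' y, B.indicator (P X₁) y :=
        ENNReal.tsum_add
    _ ≤ (∑' y, (T ∩ Bᶜ).indicator (fun y => ENNReal.ofReal (Real.exp ε') * P X₂ y) y)
        + ENNReal.ofReal δ := by
        refine add_le_add (ENNReal.tsum_le_tsum (fun y => ?_)) part1
        by_cases hy : y ∈ T ∩ Bᶜ
        · rw [Set.indicator_of_mem hy, Set.indicator_of_mem hy]
          exact hBc y hy.2
        · rw [Set.indicator_of_notMem hy, Set.indicator_of_notMem hy]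
    _ ≤ ENNReal.ofReal (Real.exp ε') * (∑' y, T.indicator (P X₂) y) + ENNReal.ofReal δ := by
        refine add_le_add ?_ le_rfl
        calc (∑' y, (T ∩ Bᶜ).indicator (fun y => ENNReal.ofReal (Real.exp ε') * P X₂ y) y)
            = ∑' y, ENNReal.ofReal (Real.exp ε') * (T ∩ Bᶜ).indicator (P X₂) y := by
              exact tsum_congr (fun y => Set.indicator_const_mul _ _ _ y)
          _ = ENNReal.ofReal (Real.exp ε') * ∑' y, (T ∩ Bᶜ).indicator (P X₂) y :=
              ENNReal.tsum_mul_left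
          _ ≤ ENNReal.ofReal (Real.exp ε') * ∑' y, T.indicator (P X₂) y := by
              refine mul_le_mul_right (ENNReal.tsum_le_tsum (fun y => ?_)) _
              exact Set.indicator_le_indicator_of_subset Set.inter_subset_left
                (fun _ => zero_le) y
end

section
/- Fix ε₁, ε₂, ε ≥ 0 and δ₁, δ₂, δ ∈ [0,1]. Assume that for every (ε₁,δ₁)-LDP randomizer Q₁ : {0,1} → {0,1} and every (ε₂,δ₂)-LDP randomizer Q₂ : {0,1} → {0,1}, the composition Q₂ ∘ Q₁ is an (ε,δ)-LDP randomizer. Then for every countable sets 𝒴, 𝒵, every (ε₁,δ₁)-LDP randomizer R₁ : 𝒳 → 𝒴 and every (ε₂,δ₂)-LDP randomizer R₂ : 𝒴 → 𝒵, the composition R₂ ∘ R₁ is an (ε,δ)-LDP randomizer. -/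
open scoped ENNReal

/-- The local randomizer `R` satisfies `(ε, δ)`-local differential privacy. -/
def IsLDP {X Y : Type*} (R : X → PMF Y) (ε δ : ℝ) : Prop :=
  ∀ x x' : X, ∀ S : Set Y, pr (R x) S ≤ Real.exp ε * pr (R x') S + δ

namespace LDPAux

lemma om_le_one {Y : Type*} (p : PMF Y) (S : Set Y) : p.toOuterMeasure S ≤ 1 := by
  rw [PMF.toOuterMeasure_apply]
  calc ∑' y, S.indicator p y ≤ ∑' y, p y :=
        ENNReal.tsum_le_tsum fun y => Set.indicator_le_self _ _ _
    _ = 1 := p.tsum_coe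

lemma om_ne_top {Y : Type*} (p : PMF Y) (S : Set Y) : p.toOuterMeasure S ≠ ∞ :=
  ((om_le_one p S).trans_lt ENNReal.one_lt_top).ne

lemma om_subtype {Y : Type*} (p : PMF Y) (S : Set Y) :
    p.toOuterMeasure S = ∑' y : S, p y := by
  rw [PMF.toOuterMeasure_apply, tsum_subtype]

lemma om_compl {Y : Type*} (p : PMF Y) (S : Set Y) :
    p.toOuterMeasure Sᶜ = 1 - p.toOuterMeasure S := by
  refine ENNReal.eq_sub_of_add_eq (om_ne_top p S) ?_
  rw [om_subtype, om_subtype, add_comm]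
  rw [Summable.tsum_add_tsum_compl (s := S) ENNReal.summable ENNReal.summable, p.tsum_coe]

lemma isLDP_iff {X Y : Type*} (R : X → PMF Y) {ε δ : ℝ} (hδ : 0 ≤ δ) :
    IsLDP R ε δ ↔ ∀ x x' : X, ∀ S : Set Y,
      (R x).toOuterMeasure S ≤
        ENNReal.ofReal (Real.exp ε) * (R x').toOuterMeasure S + ENNReal.ofReal δ := by
  constructor
  · intro h x x' S
    have h' := h x x' S
    calc (R x).toOuterMeasure S = ENNReal.ofReal (pr (R x) S) :=
          (ENNReal.ofReal_toReal (om_ne_top _ _)).symm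
      _ ≤ ENNReal.ofReal (Real.exp ε * pr (R x') S + δ) := ENNReal.ofReal_le_ofReal h'
      _ = ENNReal.ofReal (Real.exp ε * pr (R x') S) + ENNReal.ofReal δ :=
          ENNReal.ofReal_add (mul_nonneg (Real.exp_nonneg ε) ENNReal.toReal_nonneg) hδ
      _ = ENNReal.ofReal (Real.exp ε) * ENNReal.ofReal (pr (R x') S) + ENNReal.ofReal δ := by
          rw [ENNReal.ofReal_mul (Real.exp_nonneg ε)]
      _ = ENNReal.ofReal (Real.exp ε) * (R x').toOuterMeasure S + ENNReal.ofReal δ := by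
          rw [pr, ENNReal.ofReal_toReal (om_ne_top _ _)]
  · intro h x x' S
    have h' := h x x' S
    have hfin : ENNReal.ofReal (Real.exp ε) * (R x').toOuterMeasure S + ENNReal.ofReal δ ≠ ∞ :=
      ENNReal.add_ne_top.mpr ⟨ENNReal.mul_ne_top ENNReal.ofReal_ne_top (om_ne_top _ _),
        ENNReal.ofReal_ne_top⟩
    have := ENNReal.toReal_mono hfin h'
    rwa [ENNReal.toReal_add (ENNReal.mul_ne_top ENNReal.ofReal_ne_top (om_ne_top _ _))
      ENNReal.ofReal_ne_top, ENNReal.toReal_mul, ENNReal.toReal_ofReal (Real.exp_nonneg ε),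
      ENNReal.toReal_ofReal hδ] at this

lemma key {Y : Type*} (μ ν : PMF Y) {E d : ℝ≥0∞} (hE : E ≠ ∞)
    (h : ∀ A : Set Y, μ.toOuterMeasure A ≤ E * ν.toOuterMeasure A + d)
    (g : Y → ℝ≥0∞) (hg : ∀ y, g y ≤ 1) :
    ∑' y, μ y * g y ≤ E * ∑' y, ν y * g y + d := by
  classical
  set A : Set Y := {y | E * ν y < μ y} with hA
  have hsub : ∀ (f : Y → ℝ≥0∞) (B : Set Y), ∑' y : B, f y ≤ ∑' y, f y := by
    intro f B
    rw [tsum_subtype]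
    exact ENNReal.tsum_le_tsum fun y => Set.indicator_le_self _ _ _
  have hsplitν : ∑' y : A, (ν y * g y) + ∑' y : ↥Aᶜ, (ν y * g y) = ∑' y, ν y * g y :=
    Summable.tsum_add_tsum_compl (f := fun y => ν y * g y) (s := A) ENNReal.summable ENNReal.summable
  have partAc : ∑' y : ↥Aᶜ, (μ y * g y) ≤ E * ∑' y : ↥Aᶜ, (ν y * g y) := by
    rw [← ENNReal.tsum_mul_left]
    refine ENNReal.tsum_le_tsum ?_
    rintro ⟨y, hy⟩
    have hle : μ y ≤ E * ν y := not_lt.mp hy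
    calc μ y * g y ≤ E * ν y * g y := mul_le_mul_left hle _
      _ = E * (ν y * g y) := mul_assoc _ _ _
  have hd : ∑' y : A, (μ y - E * ν y) ≤ d := by
    have hνfin : ∑' y : A, (E * ν y) ≠ ∞ := by
      rw [ENNReal.tsum_mul_left]
      exact ENNReal.mul_ne_top hE
        (((hsub ν A).trans_eq ν.tsum_coe).trans_lt ENNReal.one_lt_top).ne
    refine (ENNReal.add_le_add_iff_right hνfin).mp ?_
    have hcanc : ∑' y : A, (μ y - E * ν y) + ∑' y : A, (E * ν y) = ∑' y : A, μ y := by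
      rw [← ENNReal.tsum_add]
      exact tsum_congr fun y => tsub_add_cancel_of_le (le_of_lt y.2)
    rw [hcanc]
    have := h A
    rw [om_subtype, om_subtype] at this
    calc ∑' y : A, μ y ≤ E * ∑' y : A, ν y + d := this
      _ = d + ∑' y : A, (E * ν y) := by rw [ENNReal.tsum_mul_left, add_comm]
  have partA : ∑' y : A, (μ y * g y) ≤ E * ∑' y : A, (ν y * g y) + d := by
    have hpt : ∀ y : A, μ y * g y ≤ E * ((ν : Y → ℝ≥0∞) y * g y) + (μ y - E * ν y) := by
      rintro ⟨y, hy⟩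
      have hle : E * ν y ≤ μ y := le_of_lt hy
      calc μ y * g y = (E * ν y + (μ y - E * ν y)) * g y := by rw [add_tsub_cancel_of_le hle]
        _ = E * ν y * g y + (μ y - E * ν y) * g y := add_mul _ _ _
        _ ≤ E * (ν y * g y) + (μ y - E * ν y) := by
            rw [mul_assoc]
            refine add_le_add_right ?_ _
            calc (μ y - E * ν y) * g y ≤ (μ y - E * ν y) * 1 := mul_le_mul_right (hg y) _
              _ = μ y - E * ν y := mul_one _
    calc ∑' y : A, (μ y * g y) ≤ ∑' y : A, (E * ((ν : Y → ℝ≥0∞) y * g y) + (μ y - E * ν y)) :=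
          ENNReal.tsum_le_tsum hpt
      _ = E * ∑' y : A, (ν y * g y) + ∑' y : A, (μ y - E * ν y) := by
          rw [ENNReal.tsum_add, ENNReal.tsum_mul_left]
      _ ≤ E * ∑' y : A, (ν y * g y) + d := add_le_add_right hd _
  calc ∑' y, μ y * g y = ∑' y : A, (μ y * g y) + ∑' y : ↥Aᶜ, (μ y * g y) :=
        (Summable.tsum_add_tsum_compl (f := fun y => μ y * g y) (s := A) ENNReal.summable ENNReal.summable).symm
    _ ≤ (E * ∑' y : A, (ν y * g y) + d) + E * ∑' y : ↥Aᶜ, (ν y * g y) :=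
        add_le_add partA partAc
    _ = E * (∑' y : A, (ν y * g y) + ∑' y : ↥Aᶜ, (ν y * g y)) + d := by ring
    _ = E * ∑' y, ν y * g y + d := by rw [hsplitν]

open scoped Classical in
lemma bern_om (p : ℝ≥0∞) (h : p ≤ 1) (h' : p.toNNReal ≤ 1) (T : Set Bool) :
    (PMF.bernoulli p.toNNReal h').toOuterMeasure T =
      (if false ∈ T then 1 - p else 0) + (if true ∈ T then p else 0) := by
  classical
  rw [PMF.toOuterMeasure_apply, tsum_bool]
  simp [Set.indicator_apply, PMF.bernoulli_apply, ENNReal.coe_sub,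
    ENNReal.coe_toNNReal (ne_top_of_le_ne_top ENNReal.one_ne_top h)]

lemma bern_le {p : ℝ≥0∞} (h : p ≤ 1) : p.toNNReal ≤ 1 := by
  simpa using ENNReal.toNNReal_mono ENNReal.one_ne_top h

end LDPAux


open LDPAux

/-- Reduction of composition of LDP randomizers to the binary case: if the composition
of every `(ε₁, δ₁)`-LDP randomizer `Q₁ : {0,1} → {0,1}` with every `(ε₂, δ₂)`-LDP
randomizer `Q₂ : {0,1} → {0,1}` is `(ε, δ)`-LDP, then for all countable `𝒴, 𝒵`, every
`(ε₁, δ₁)`-LDP randomizer `R₁ : 𝒳 → 𝒴` and every `(ε₂, δ₂)`-LDP randomizer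
`R₂ : 𝒴 → 𝒵`, the composition `R₂ ∘ R₁` (i.e. `x ↦ (R₁ x).bind R₂`) is `(ε, δ)`-LDP. -/
theorem composition_of_ldp_randomizers {X Y Z : Type*} [Countable Y] [Countable Z]
    (ε₁ ε₂ ε δ₁ δ₂ δ : ℝ) (hε₁ : 0 ≤ ε₁) (hε₂ : 0 ≤ ε₂) (hε : 0 ≤ ε)
    (hδ₁ : 0 ≤ δ₁ ∧ δ₁ ≤ 1) (hδ₂ : 0 ≤ δ₂ ∧ δ₂ ≤ 1) (hδ : 0 ≤ δ ∧ δ ≤ 1)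
    (hbinary : ∀ (Q₁ : Bool → PMF Bool) (Q₂ : Bool → PMF Bool),
      IsLDP Q₁ ε₁ δ₁ → IsLDP Q₂ ε₂ δ₂ → IsLDP (fun b => (Q₁ b).bind Q₂) ε δ)
    (R₁ : X → PMF Y) (R₂ : Y → PMF Z)
    (h₁ : IsLDP R₁ ε₁ δ₁) (h₂ : IsLDP R₂ ε₂ δ₂) :
    IsLDP (fun x => (R₁ x).bind R₂) ε δ := by
  classical
  set E₁ : ℝ≥0∞ := ENNReal.ofReal (Real.exp ε₁) with hE₁def
  set E₂ : ℝ≥0∞ := ENNReal.ofReal (Real.exp ε₂) with hE₂def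
  set E : ℝ≥0∞ := ENNReal.ofReal (Real.exp ε) with hEdef
  set d₁ : ℝ≥0∞ := ENNReal.ofReal δ₁
  set d₂ : ℝ≥0∞ := ENNReal.ofReal δ₂
  set d : ℝ≥0∞ := ENNReal.ofReal δ
  have hE₁1 : (1 : ℝ≥0∞) ≤ E₁ := ENNReal.one_le_ofReal.mpr (Real.one_le_exp hε₁)
  have hE₂1 : (1 : ℝ≥0∞) ≤ E₂ := ENNReal.one_le_ofReal.mpr (Real.one_le_exp hε₂)
  have hE1 : (1 : ℝ≥0∞) ≤ E := ENNReal.one_le_ofReal.mpr (Real.one_le_exp hε)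
  have hE₂0 : E₂ ≠ 0 := (ENNReal.ofReal_pos.mpr (Real.exp_pos ε₂)).ne'
  have h₁' := (isLDP_iff R₁ hδ₁.1).mp h₁
  have h₂' := (isLDP_iff R₂ hδ₂.1).mp h₂
  rw [isLDP_iff _ hδ.1]
  intro x x' S
  simp only [PMF.toOuterMeasure_bind_apply]
  haveI : Nonempty Y := ⟨((R₁ x).support_nonempty).choose⟩
  set f : Y → ℝ≥0∞ := fun y => (R₂ y).toOuterMeasure S with hfdef
  have hf1 : ∀ y, f y ≤ 1 := fun y => om_le_one _ _
  set M : ℝ≥0∞ := ⨆ y, f y with hMdef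
  set m : ℝ≥0∞ := ⨅ y, f y with hmdef
  have hmf : ∀ y, m ≤ f y := fun y => iInf_le _ y
  have hfM : ∀ y, f y ≤ M := fun y => le_iSup _ y
  have hM1 : M ≤ 1 := iSup_le hf1
  have hm1 : m ≤ 1 := le_trans (hmf (Classical.arbitrary Y)) (hf1 _)
  have hmM : m ≤ M := le_trans (hmf (Classical.arbitrary Y)) (hfM _)
  have hMtop : M ≠ ∞ := (hM1.trans_lt ENNReal.one_lt_top).ne
  have hmtop : m ≠ ∞ := (hm1.trans_lt ENNReal.one_lt_top).ne
  -- sup/inf inequalities from LDP of R₂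
  have supinf : ∀ f' : Y → ℝ≥0∞, (∀ y y', f' y ≤ E₂ * f' y' + d₂) →
      (⨆ y, f' y) ≤ E₂ * (⨅ y, f' y) + d₂ := by
    intro f' hf'
    refine iSup_le fun y => ?_
    rw [← tsub_le_iff_right]
    have hdiv : (f' y - d₂) / E₂ ≤ ⨅ y', f' y' := by
      refine le_iInf fun y' => ?_
      rw [ENNReal.div_le_iff hE₂0 ENNReal.ofReal_ne_top]
      rw [tsub_le_iff_right, mul_comm]
      exact hf' y y'
    rw [ENNReal.div_le_iff hE₂0 ENNReal.ofReal_ne_top] at hdiv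
    rwa [mul_comm] at hdiv
  have hff : ∀ y y', f y ≤ E₂ * f y' + d₂ := fun y y' => h₂' y y' S
  have hff' : ∀ y y', (1 - f y) ≤ E₂ * (1 - f y') + d₂ := by
    intro y y'
    have := h₂' y y' Sᶜ
    rwa [om_compl, om_compl] at this
  have hMEm : M ≤ E₂ * m + d₂ := supinf f hff
  have h1m : (1 - m) ≤ E₂ * (1 - M) + d₂ := by
    have := supinf (fun y => 1 - f y) hff'
    rwa [← ENNReal.sub_iSup ENNReal.one_ne_top, ← ENNReal.sub_iInf] at this
  -- trivial monotone inequalities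
  have htriv₂ : ∀ a b : ℝ≥0∞, a ≤ b → a ≤ E₂ * b + d₂ := fun a b hab =>
    le_add_right (hab.trans (le_mul_of_one_le_left' hE₂1))
  have htriv₁ : ∀ a b : ℝ≥0∞, a ≤ b → a ≤ E₁ * b + d₁ := fun a b hab =>
    le_add_right (hab.trans (le_mul_of_one_le_left' hE₁1))
  -- degenerate case: f is constant
  by_cases hcase : M ≤ m
  · have hconst : ∀ y, f y = m := fun y => le_antisymm ((hfM y).trans hcase) (hmf y)
    have hsum : ∀ u : X, ∑' y, (R₁ u) y * f y = m := by
      intro u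
      simp only [hconst]
      rw [ENNReal.tsum_mul_right, (R₁ u).tsum_coe, one_mul]
    rw [hsum x, hsum x']
    exact le_add_right (le_mul_of_one_le_left' hE1)
  · -- nondegenerate case
    set c : ℝ≥0∞ := M - m with hcdef
    have hc0 : c ≠ 0 := by
      simp only [hcdef, ne_eq, tsub_eq_zero_iff_le]
      exact hcase
    have hctop : c ≠ ∞ := ((tsub_le_self).trans_lt (hMtop.lt_top)).ne
    set g : Y → ℝ≥0∞ := fun y => (f y - m) / c with hgdef
    have hg1 : ∀ y, g y ≤ 1 := by
      intro y
      rw [hgdef]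
      rw [ENNReal.div_le_iff hc0 hctop, one_mul]
      exact tsub_le_tsub_right (hfM y) m
    have hgf : ∀ y, m + c * g y = f y := by
      intro y
      rw [hgdef]
      simp only []
      rw [ENNReal.mul_div_cancel hc0 hctop]
      exact add_tsub_cancel_of_le (hmf y)
    -- the Bernoulli parameters
    set P : Bool → ℝ≥0∞ := fun b => cond b (∑' y, (R₁ x) y * g y) (∑' y, (R₁ x') y * g y)
      with hPdef
    have hsum1 : ∀ u : X, ∑' y, (R₁ u) y * g y ≤ 1 := by
      intro u
      calc ∑' y, (R₁ u) y * g y ≤ ∑' y, (R₁ u) y * 1 :=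
            ENNReal.tsum_le_tsum fun y => mul_le_mul_right (hg1 y) _
        _ = 1 := by simp [(R₁ u).tsum_coe]
    have hP1 : ∀ b, P b ≤ 1 := by intro b; cases b <;> exact hsum1 _
    -- complement sums
    have hcompl : ∀ u : X, ∑' y, (R₁ u) y * (1 - g y) = 1 - ∑' y, (R₁ u) y * g y := by
      intro u
      refine ENNReal.eq_sub_of_add_eq ((hsum1 u).trans_lt ENNReal.one_lt_top).ne ?_
      rw [← ENNReal.tsum_add]
      calc ∑' y, ((R₁ u) y * (1 - g y) + (R₁ u) y * g y)
          = ∑' y, (R₁ u) y * ((1 - g y) + g y) := by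
            exact tsum_congr fun y => (mul_add _ _ _).symm
        _ = ∑' y, (R₁ u) y := tsum_congr fun y => by
            rw [tsub_add_cancel_of_le (hg1 y), mul_one]
        _ = 1 := (R₁ u).tsum_coe
    -- key inequalities for P
    have hkey : ∀ u v : X, ∀ g' : Y → ℝ≥0∞, (∀ y, g' y ≤ 1) →
        ∑' y, (R₁ u) y * g' y ≤ E₁ * ∑' y, (R₁ v) y * g' y + d₁ :=
      fun u v g' hg' => key (R₁ u) (R₁ v) ENNReal.ofReal_ne_top (fun A => h₁' u v A) g' hg'
    have hPP : ∀ b b' : Bool, P b ≤ E₁ * P b' + d₁ := by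
      intro b b'
      cases b <;> cases b' <;>
        first
          | exact htriv₁ _ _ le_rfl
          | exact hkey _ _ g hg1
    have hPP' : ∀ b b' : Bool, 1 - P b ≤ E₁ * (1 - P b') + d₁ := by
      intro b b'
      have h1g : ∀ y, (1 : ℝ≥0∞) - g y ≤ 1 := fun y => tsub_le_self
      cases b <;> cases b' <;>
        simp only [hPdef, Bool.cond_false, Bool.cond_true] <;>
        first
          | exact htriv₁ _ _ le_rfl
          | · rw [← hcompl, ← hcompl]
              exact hkey _ _ (fun y => 1 - g y) h1g
    -- binary randomizers
    set Q₁ : Bool → PMF Bool := fun b => PMF.bernoulli (P b).toNNReal (bern_le (hP1 b)) with hQ₁def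
    set Qm : Bool → ℝ≥0∞ := fun b => cond b M m with hQmdef
    have hQm1 : ∀ b, Qm b ≤ 1 := by intro b; cases b <;> assumption
    set Q₂ : Bool → PMF Bool := fun b => PMF.bernoulli (Qm b).toNNReal (bern_le (hQm1 b)) with hQ₂def
    have hQ₁ldp : IsLDP Q₁ ε₁ δ₁ := by
      rw [isLDP_iff _ hδ₁.1]
      intro b b' T
      rw [hQ₁def]
      simp only []
      rw [bern_om _ (hP1 b), bern_om _ (hP1 b')]
      by_cases hT : true ∈ T <;> by_cases hF : false ∈ T <;> simp only [hT, hF, if_true, if_false]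
      · -- both
        rw [tsub_add_cancel_of_le (hP1 b), tsub_add_cancel_of_le (hP1 b')]
        exact htriv₁ 1 1 le_rfl
      · -- true only
        rw [zero_add, zero_add]
        exact hPP b b'
      · -- false only
        rw [add_zero, add_zero]
        exact hPP' b b'
      · simp
    have hQ₂ldp : IsLDP Q₂ ε₂ δ₂ := by
      rw [isLDP_iff _ hδ₂.1]
      intro b b' T
      rw [hQ₂def]
      simp only []
      rw [bern_om _ (hQm1 b), bern_om _ (hQm1 b')]
      have hQQ : ∀ b b' : Bool, Qm b ≤ E₂ * Qm b' + d₂ := by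
        intro b b'
        cases b <;> cases b'
        · exact htriv₂ _ _ le_rfl
        · exact htriv₂ _ _ hmM
        · exact hMEm
        · exact htriv₂ _ _ le_rfl
      have hQQ' : ∀ b b' : Bool, 1 - Qm b ≤ E₂ * (1 - Qm b') + d₂ := by
        intro b b'
        cases b <;> cases b'
        · exact htriv₂ _ _ le_rfl
        · exact h1m
        · exact htriv₂ _ _ (tsub_le_tsub_left hmM 1)
        · exact htriv₂ _ _ le_rfl
      by_cases hT : true ∈ T <;> by_cases hF : false ∈ T <;> simp only [hT, hF, if_true, if_false]
      · rw [tsub_add_cancel_of_le (hQm1 b), tsub_add_cancel_of_le (hQm1 b')]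
        exact htriv₂ 1 1 le_rfl
      · rw [zero_add, zero_add]
        exact hQQ b b'
      · rw [add_zero, add_zero]
        exact hQQ' b b'
      · simp
    -- apply the binary hypothesis
    have hcomp := hbinary Q₁ Q₂ hQ₁ldp hQ₂ldp
    rw [isLDP_iff _ hδ.1] at hcomp
    have hmain := hcomp true false {true}
    -- compute the composed measures
    have hbind : ∀ b : Bool, ((Q₁ b).bind Q₂).toOuterMeasure {true}
        = (1 - P b) * m + P b * M := by
      intro b
      rw [PMF.toOuterMeasure_bind_apply, tsum_bool]
      have hs : ∀ q (hq : q ≤ 1) (hq' : q.toNNReal ≤ 1),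
          (PMF.bernoulli q.toNNReal hq').toOuterMeasure {true} = q := by
        intro q hq hq'
        rw [PMF.toOuterMeasure_apply_singleton, PMF.bernoulli_apply]
        exact ENNReal.coe_toNNReal (ne_top_of_le_ne_top ENNReal.one_ne_top hq)
      simp only [hQ₂def, hQ₁def]
      rw [hs _ (hQm1 _), hs _ (hQm1 _)]
      simp only [hQmdef, PMF.bernoulli_apply, Bool.cond_true, Bool.cond_false, ENNReal.coe_sub,
        ENNReal.coe_one, ENNReal.coe_toNNReal (ne_top_of_le_ne_top ENNReal.one_ne_top (hP1 b))]
    rw [hbind true, hbind false] at hmain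
    -- identify with the target sums
    have hval : ∀ (u : X) (q : ℝ≥0∞), q = ∑' y, (R₁ u) y * g y →
        (1 - q) * m + q * M = ∑' y, (R₁ u) y * f y := by
      intro u q hq
      have hq1 : q ≤ 1 := hq ▸ hsum1 u
      have hsumf : ∑' y, (R₁ u) y * f y = m + c * q := by
        rw [hq]
        calc ∑' y, (R₁ u) y * f y = ∑' y, ((R₁ u) y * m + (R₁ u) y * (c * g y)) := by
              refine tsum_congr fun y => ?_
              rw [← mul_add, hgf y]
          _ = (∑' y, (R₁ u) y) * m + ∑' y, (R₁ u) y * (c * g y) := by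
              rw [ENNReal.tsum_add, ENNReal.tsum_mul_right]
          _ = m + c * ∑' y, (R₁ u) y * g y := by
              rw [(R₁ u).tsum_coe, one_mul]
              congr 1
              rw [← ENNReal.tsum_mul_left]
              exact tsum_congr fun y => by ring
      rw [hsumf]
      have hqm : q * m ≤ m := mul_le_of_le_one_left' hq1
      have hqM : q * m ≤ q * M := mul_le_mul_right hmM q
      have e1 : (1 - q) * m = m - q * m := by
        rw [ENNReal.sub_mul fun _ _ => hmtop, one_mul]
      have e2 : c * q = q * M - q * m := by
        rw [hcdef, ENNReal.sub_mul fun _ _ => ((hq1.trans_lt ENNReal.one_lt_top).ne),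
          mul_comm M q, mul_comm m q]
      rw [e1, e2]
      calc m - q * m + q * M = m - q * m + (q * m + (q * M - q * m)) := by
            rw [add_tsub_cancel_of_le hqM]
        _ = (m - q * m + q * m) + (q * M - q * m) := by rw [add_assoc]
        _ = m + (q * M - q * m) := by rw [tsub_add_cancel_of_le hqm]
    rw [hval x (P true) rfl, hval x' (P false) rfl] at hmain
    exact hmain
end

section
/- Let R : 𝒳 → 𝒴 be an (ε,δ)-DP mechanism with respect to a neighboring relation on 𝒳, and let x ∼ x' be neighboring inputs. Then there exists a randomized algorithm Q : {0, 1, 2, 3} → 𝒴 (assigning each of the four labels a probability measure on 𝒴, where labels 2 and 3 stand for “I am x” and “I am x'”) such that, as probability measures, R(x) = ((1−δ)e^ε/(e^ε+1))·Q(0) + ((1−δ)/(e^ε+1))·Q(1) + δ·Q(2) and R(x') = ((1−δ)/(e^ε+1))·Q(0) + ((1−δ)e^ε/(e^ε+1))·Q(1) + δ·Q(3). -/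
open MeasureTheory
open scoped ENNReal


lemma leftover {Y : Type*} [MeasurableSpace Y] (μ : Measure Y) (A B D : ℝ≥0∞)
    (hsum : A + B + D = 1) (P : Measure Y) [IsProbabilityMeasure P]
    (f q0 q1 : Y → ℝ≥0∞) (hfm : Measurable f) (h0m : Measurable q0) (h1m : Measurable q1)
    (hf : P = μ.withDensity f)
    (hle : ∀ y, A * q0 y + B * q1 y ≤ f y)
    (hq0 : ∫⁻ y, q0 y ∂μ = 1) (hq1 : ∫⁻ y, q1 y ∂μ = 1) :
    ∃ Q2 : Measure Y, IsProbabilityMeasure Q2 ∧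
      P = A • μ.withDensity q0 + B • μ.withDensity q1 + D • Q2 := by
  have hD : D ≠ ∞ := fun h => by simp [h] at hsum
  have hAB : A + B ≠ ∞ := fun h => by
    have : A + B + D = ∞ := by simp [ENNReal.add_eq_top, h]
    simp [hsum] at this
  set s : Y → ℝ≥0∞ := fun y => A * q0 y + B * q1 y with hs
  have hsm : Measurable s := ((h0m.const_mul A).add (h1m.const_mul B))
  have hsint : ∫⁻ y, s y ∂μ = A + B := by
    rw [hs]
    rw [lintegral_add_left ((h0m.const_mul A)),
      lintegral_const_mul _ h1m, lintegral_const_mul _ h0m, hq0, hq1, mul_one, mul_one]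
  have hfint : ∫⁻ y, f y ∂μ = 1 := by
    have : μ.withDensity f Set.univ = 1 := by rw [← hf]; simp
    simpa [withDensity_apply _ MeasurableSet.univ] using this
  have hsne : ∫⁻ y, s y ∂μ ≠ ∞ := by rw [hsint]; exact hAB
  set r : Y → ℝ≥0∞ := fun y => f y - s y with hr
  have hrm : Measurable r := hfm.sub hsm
  have hrint : ∫⁻ y, r y ∂μ = D := by
    rw [hr]
    rw [lintegral_sub hsm hsne (Filter.Eventually.of_forall hle), hsint, hfint]
    rw [← hsum, ENNReal.add_sub_cancel_left hAB]
  have hsr : ∀ y, s y + r y = f y := fun y => add_tsub_cancel_of_le (hle y)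
  have hwd : μ.withDensity f = A • μ.withDensity q0 + B • μ.withDensity q1 + μ.withDensity r := by
    have : f = (fun y => A * q0 y) + ((fun y => B * q1 y) + r) := by
      funext y
      simp only [Pi.add_apply]
      rw [← add_assoc]
      exact (hsr y).symm
    rw [this, withDensity_add_left (h0m.const_mul A), withDensity_add_left (h1m.const_mul B)]
    rw [show (fun y => A * q0 y) = A • q0 from rfl, show (fun y => B * q1 y) = B • q1 from rfl,
      withDensity_smul _ h0m, withDensity_smul _ h1m, add_assoc]
  by_cases hD0 : D = 0
  · refine ⟨P, inferInstance, ?_⟩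
    have : μ.withDensity r = 0 := by
      rw [← Measure.measure_univ_eq_zero, withDensity_apply _ MeasurableSet.univ]
      simpa [hD0] using hrint
    rw [hf, hwd, this, hD0]
    simp
  · refine ⟨μ.withDensity (fun y => r y / D), ?_, ?_⟩
    · constructor
      rw [withDensity_apply _ MeasurableSet.univ]
      simp only [Measure.restrict_univ]
      rw [show (fun y => r y / D) = fun y => r y * D⁻¹ by simp [div_eq_mul_inv],
        lintegral_mul_const' _ _ (by simpa using hD0), hrint,
        ENNReal.mul_inv_cancel hD0 hD]
    · have : D • μ.withDensity (fun y => r y / D) = μ.withDensity r := by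
        rw [← withDensity_smul' _ _ hD]
        congr 1
        funext y
        simp only [Pi.smul_apply, smul_eq_mul]
        exact ENNReal.mul_div_cancel hD0 hD
      rw [hf, hwd, this]
lemma transfer {Y : Type*} [MeasurableSpace Y] (μ : Measure Y) (E A B : ℝ≥0∞)
    (hE1 : 1 ≤ E) (hEt : E ≠ ∞) (hBt : B ≠ ∞) (hA : A = E * B)
    (f g u v : Y → ℝ≥0∞) (hum : Measurable u) (hvm : Measurable v)
    (hfu : ∀ y, A * u y + B * v y ≤ f y) (hgu : ∀ y, B * u y + A * v y ≤ g y)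
    (hMut : ∫⁻ y, u y ∂μ ≠ ∞) (hMvt : ∫⁻ y, v y ∂μ ≠ ∞)
    (h1 : E + 1 ≤ E * ∫⁻ y, u y ∂μ + ∫⁻ y, v y ∂μ)
    (hcase : ∫⁻ y, u y ∂μ < 1) :
    ∃ U V : Y → ℝ≥0∞, Measurable U ∧ Measurable V ∧
      (∀ y, A * U y + B * V y ≤ f y) ∧ (∀ y, B * U y + A * V y ≤ g y) ∧
      (1 ≤ ∫⁻ y, U y ∂μ) ∧ (∫⁻ y, U y ∂μ ≠ ∞) ∧
      (1 ≤ ∫⁻ y, V y ∂μ) ∧ (∫⁻ y, V y ∂μ ≠ ∞) := by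
  set Mu := ∫⁻ y, u y ∂μ with hMu
  set Mv := ∫⁻ y, v y ∂μ with hMv
  have hAt : A ≠ ∞ := by rw [hA]; exact ENNReal.mul_ne_top hEt hBt
  have hEMu : E * (1 - Mu) = E - E * Mu := by
    rw [ENNReal.mul_sub (fun _ _ => hEt), mul_one]
  have key : E * (1 - Mu) + 1 ≤ Mv := by
    rw [hEMu, ENNReal.sub_add_eq_add_sub (mul_le_of_le_one_right (zero_le : 0 ≤ E) hcase.le)
      (ENNReal.mul_ne_top hEt (ne_top_of_le_ne_top ENNReal.one_ne_top hcase.le))]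
    exact tsub_le_iff_left.mpr h1
  have hkey' : E * (1 - Mu) ≤ Mv := le_trans le_self_add key
  have hMv0 : Mv ≠ 0 := by
    intro h
    rw [h] at key
    simp at key
  set θ : ℝ≥0∞ := (1 - Mu) / Mv with hθ
  have hθt : θ ≠ ∞ :=
    (ENNReal.div_lt_top (ne_top_of_le_ne_top ENNReal.one_ne_top tsub_le_self) hMv0).ne
  have hEθ : E * θ ≤ 1 := by
    rw [hθ, ← mul_div_assoc]
    exact ENNReal.div_le_of_le_mul (by rwa [one_mul])
  have hθMv : θ * Mv = 1 - Mu := ENNReal.div_mul_cancel hMv0 hMvt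
  have hAθB : A * θ ≤ B := by
    rw [hA, mul_comm E B, mul_assoc]
    calc B * (E * θ) ≤ B * 1 := mul_le_mul_right hEθ B
    _ = B := mul_one B
  have hcoef1 : A * θ + B * (1 - E * θ) = B := by
    rw [ENNReal.mul_sub (fun _ _ => hBt), mul_one]
    rw [show B * (E * θ) = A * θ by rw [hA]; ring]
    exact add_tsub_cancel_of_le hAθB
  have hAEθ : A * (E * θ) ≤ A := by
    calc A * (E * θ) ≤ A * 1 := mul_le_mul_right hEθ A
    _ = A := mul_one A
  have hcoef2 : B * θ + A * (1 - E * θ) ≤ A := by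
    rw [ENNReal.mul_sub (fun _ _ => hAt), mul_one]
    have hBθ : B * θ ≤ A * (E * θ) := by
      rw [hA]
      calc B * θ = B * θ * 1 := (mul_one _).symm
      _ ≤ B * θ * (E * E) := mul_le_mul_right (by calc (1:ℝ≥0∞) = 1 * 1 := (one_mul 1).symm
        _ ≤ E * E := mul_le_mul' hE1 hE1) _
      _ = E * B * (E * θ) := by ring
    calc B * θ + (A - A * (E * θ)) ≤ A * (E * θ) + (A - A * (E * θ)) := add_le_add_left hBθ _
    _ = A := add_tsub_cancel_of_le hAEθ
  refine ⟨fun y => u y + θ * v y, fun y => (1 - E * θ) * v y,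
    hum.add (hvm.const_mul θ), hvm.const_mul _, ?_, ?_, ?_, ?_, ?_, ?_⟩
  · intro y
    calc A * (u y + θ * v y) + B * ((1 - E * θ) * v y)
        = A * u y + (A * θ + B * (1 - E * θ)) * v y := by ring
      _ = A * u y + B * v y := by rw [hcoef1]
      _ ≤ f y := hfu y
  · intro y
    calc B * (u y + θ * v y) + A * ((1 - E * θ) * v y)
        = B * u y + (B * θ + A * (1 - E * θ)) * v y := by ring
      _ ≤ B * u y + A * v y := by
          exact add_le_add_right (mul_le_mul_left hcoef2 _) _
      _ ≤ g y := hgu y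
  · rw [lintegral_add_left hum, lintegral_const_mul _ hvm, ← hMu, ← hMv, hθMv,
      add_tsub_cancel_of_le hcase.le]
  · rw [lintegral_add_left hum, lintegral_const_mul _ hvm, ← hMu, ← hMv, hθMv,
      add_tsub_cancel_of_le hcase.le]
    exact ENNReal.one_ne_top
  · rw [lintegral_const_mul _ hvm, ← hMv,
      ENNReal.sub_mul (fun _ _ => hMvt), one_mul, mul_assoc, hθMv]
    exact ENNReal.le_sub_of_add_le_left (ENNReal.mul_ne_top hEt (ne_top_of_le_ne_top ENNReal.one_ne_top tsub_le_self)) key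
  · rw [lintegral_const_mul _ hvm, ← hMv]
    exact ENNReal.mul_ne_top (ne_top_of_le_ne_top ENNReal.one_ne_top tsub_le_self) hMvt
lemma assemble {Y : Type*} [MeasurableSpace Y] (μ : Measure Y) (A B D : ℝ≥0∞)
    (hsum : A + B + D = 1) (P P' : Measure Y)
    [IsProbabilityMeasure P] [IsProbabilityMeasure P']
    (f g U V : Y → ℝ≥0∞) (hfm : Measurable f) (hgm : Measurable g)
    (hUm : Measurable U) (hVm : Measurable V)
    (hf : P = μ.withDensity f) (hg : P' = μ.withDensity g)
    (hfUV : ∀ y, A * U y + B * V y ≤ f y) (hgUV : ∀ y, B * U y + A * V y ≤ g y)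
    (hU1 : 1 ≤ ∫⁻ y, U y ∂μ) (hUt : ∫⁻ y, U y ∂μ ≠ ∞)
    (hV1 : 1 ≤ ∫⁻ y, V y ∂μ) (hVt : ∫⁻ y, V y ∂μ ≠ ∞) :
    ∃ Q0 Q1 Q2 Q3 : Measure Y, IsProbabilityMeasure Q0 ∧ IsProbabilityMeasure Q1 ∧
      IsProbabilityMeasure Q2 ∧ IsProbabilityMeasure Q3 ∧
      P = A • Q0 + B • Q1 + D • Q2 ∧ P' = B • Q0 + A • Q1 + D • Q3 := by
  set MU := ∫⁻ y, U y ∂μ with hMU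
  set MV := ∫⁻ y, V y ∂μ with hMV
  have hMU0 : MU ≠ 0 := fun h => by simp [h] at hU1
  have hMV0 : MV ≠ 0 := fun h => by simp [h] at hV1
  set q0 : Y → ℝ≥0∞ := fun y => U y / MU with hq0def
  set q1 : Y → ℝ≥0∞ := fun y => V y / MV with hq1def
  have hq0m : Measurable q0 := hUm.div_const MU
  have hq1m : Measurable q1 := hVm.div_const MV
  have hq0int : ∫⁻ y, q0 y ∂μ = 1 := by
    simp only [hq0def, div_eq_mul_inv]
    rw [lintegral_mul_const' _ _ (by simpa using hMU0), ← hMU,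
      ENNReal.mul_inv_cancel hMU0 hUt]
  have hq1int : ∫⁻ y, q1 y ∂μ = 1 := by
    simp only [hq1def, div_eq_mul_inv]
    rw [lintegral_mul_const' _ _ (by simpa using hMV0), ← hMV,
      ENNReal.mul_inv_cancel hMV0 hVt]
  have hq0le : ∀ y, q0 y ≤ U y := fun y => by
    simp only [hq0def, div_eq_mul_inv]
    calc U y * MU⁻¹ ≤ U y * 1 := mul_le_mul_right (ENNReal.inv_le_one.mpr hU1) _
    _ = U y := mul_one _
  have hq1le : ∀ y, q1 y ≤ V y := fun y => by
    simp only [hq1def, div_eq_mul_inv]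
    calc V y * MV⁻¹ ≤ V y * 1 := mul_le_mul_right (ENNReal.inv_le_one.mpr hV1) _
    _ = V y := mul_one _
  obtain ⟨Q2, hQ2p, hPeq⟩ := leftover μ A B D hsum P f q0 q1 hfm hq0m hq1m hf
    (fun y => le_trans (add_le_add (mul_le_mul_right (hq0le y) A)
      (mul_le_mul_right (hq1le y) B)) (hfUV y)) hq0int hq1int
  obtain ⟨Q3, hQ3p, hP'eq⟩ := leftover μ B A D (by rwa [add_comm B A]) P' g q0 q1 hgm hq0m hq1m hg
    (fun y => le_trans (add_le_add (mul_le_mul_right (hq0le y) B)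
      (mul_le_mul_right (hq1le y) A)) (hgUV y)) hq0int hq1int
  refine ⟨μ.withDensity q0, μ.withDensity q1, Q2, Q3, ⟨?_⟩, ⟨?_⟩, hQ2p, hQ3p, hPeq, hP'eq⟩
  · rw [withDensity_apply _ MeasurableSet.univ]
    simpa using hq0int
  · rw [withDensity_apply _ MeasurableSet.univ]
    simpa using hq1int
lemma pair_decomp {Y : Type*} [MeasurableSpace Y] (ε δ : ℝ) (hε : 0 < ε) (hδ0 : 0 ≤ δ)
    (hδ1 : δ < 1) (P P' : Measure Y) [IsProbabilityMeasure P] [IsProbabilityMeasure P']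
    (hPP' : ∀ S : Set Y, MeasurableSet S →
      P S ≤ ENNReal.ofReal (Real.exp ε) * P' S + ENNReal.ofReal δ)
    (hP'P : ∀ S : Set Y, MeasurableSet S →
      P' S ≤ ENNReal.ofReal (Real.exp ε) * P S + ENNReal.ofReal δ) :
    ∃ Q0 Q1 Q2 Q3 : Measure Y, IsProbabilityMeasure Q0 ∧ IsProbabilityMeasure Q1 ∧
      IsProbabilityMeasure Q2 ∧ IsProbabilityMeasure Q3 ∧
      P = ENNReal.ofReal ((1 - δ) * Real.exp ε / (Real.exp ε + 1)) • Q0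
          + ENNReal.ofReal ((1 - δ) / (Real.exp ε + 1)) • Q1
          + ENNReal.ofReal δ • Q2 ∧
      P' = ENNReal.ofReal ((1 - δ) / (Real.exp ε + 1)) • Q0
          + ENNReal.ofReal ((1 - δ) * Real.exp ε / (Real.exp ε + 1)) • Q1
          + ENNReal.ofReal δ • Q3 := by
  set e := Real.exp ε with he
  have he1 : 1 < e := Real.one_lt_exp_iff.mpr hε
  have he0 : 0 < e := lt_trans one_pos he1
  set a : ℝ := (1 - δ) * e / (e + 1) with ha
  set b : ℝ := (1 - δ) / (e + 1) with hb
  set c : ℝ := (1 - δ) * (e - 1) with hc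
  have hb0 : 0 < b := div_pos (by linarith) (by linarith)
  have hc0 : 0 < c := mul_pos (by linarith) (by linarith)
  set E := ENNReal.ofReal e with hE
  set A := ENNReal.ofReal a with hA
  set B := ENNReal.ofReal b with hB
  set Cc := ENNReal.ofReal c with hCc
  set D := ENNReal.ofReal δ with hD
  have hE1 : 1 ≤ E := ENNReal.one_le_ofReal.mpr he1.le
  have hEt : E ≠ ∞ := ENNReal.ofReal_ne_top
  have hBt : B ≠ ∞ := ENNReal.ofReal_ne_top
  have hB0 : B ≠ 0 := (ENNReal.ofReal_pos.mpr hb0).ne'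
  have hCct : Cc ≠ ∞ := ENNReal.ofReal_ne_top
  have hCc0 : Cc ≠ 0 := (ENNReal.ofReal_pos.mpr hc0).ne'
  have hDt : D ≠ ∞ := ENNReal.ofReal_ne_top
  have hAEB : A = E * B := by
    rw [hA, hE, hB, ← ENNReal.ofReal_mul he0.le]
    congr 1
    rw [ha, hb]
    ring
  have hCB : Cc + B = B * (E * E) := by
    rw [hCc, hB, hE, ← ENNReal.ofReal_mul he0.le, ← ENNReal.ofReal_mul hb0.le,
      ← ENNReal.ofReal_add hc0.le hb0.le]
    congr 1
    rw [hc, hb]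
    field_simp
    ring
  have ha0 : 0 ≤ a := by
    rw [ha]
    exact div_nonneg (mul_nonneg (by linarith) he0.le) (by linarith)
  have hsum : A + B + D = 1 := by
    rw [hA, hB, hD, ← ENNReal.ofReal_add ha0 hb0.le,
      ← ENNReal.ofReal_add (by positivity) hδ0, ← ENNReal.ofReal_one]
    congr 1
    rw [ha, hb]
    field_simp
    ring
  have hEp1 : ENNReal.ofReal (1 - δ) / B = E + 1 := by
    rw [hB, ← ENNReal.ofReal_div_of_pos hb0, hE, ← ENNReal.ofReal_one,
      ← ENNReal.ofReal_add he0.le zero_le_one]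
    congr 1
    rw [hb]
    rw [div_div_eq_mul_div, mul_comm, mul_div_assoc, div_self (by linarith : (1:ℝ) - δ ≠ 0),
      mul_one]
  -- measures and densities
  set μ : Measure Y := P + P' with hμdef
  have hPle : P ≤ μ := Measure.le_add_right le_rfl
  have hP'le : P' ≤ μ := Measure.le_add_left le_rfl
  have hPμ : P ≪ μ := hPle.absolutelyContinuous
  have hP'μ : P' ≪ μ := hP'le.absolutelyContinuous
  set f : Y → ℝ≥0∞ := fun y => min (P.rnDeriv μ y) 1 with hfdef
  set g : Y → ℝ≥0∞ := fun y => min (P'.rnDeriv μ y) 1 with hgdef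
  have hfm : Measurable f := (Measure.measurable_rnDeriv P μ).min measurable_const
  have hgm : Measurable g := (Measure.measurable_rnDeriv P' μ).min measurable_const
  have hf : P = μ.withDensity f := by
    have hae : f =ᵐ[μ] P.rnDeriv μ := by
      filter_upwards [Measure.rnDeriv_le_one_of_le hPle] with y hy
      simpa [hfdef] using min_eq_left hy
    rw [withDensity_congr_ae hae, Measure.withDensity_rnDeriv_eq P μ hPμ]
  have hg : P' = μ.withDensity g := by
    have hae : g =ᵐ[μ] P'.rnDeriv μ := by
      filter_upwards [Measure.rnDeriv_le_one_of_le hP'le] with y hy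
      simpa [hgdef] using min_eq_left hy
    rw [withDensity_congr_ae hae, Measure.withDensity_rnDeriv_eq P' μ hP'μ]
  have hfle : ∀ y, f y ≤ 1 := fun y => min_le_right _ _
  have hgle : ∀ y, g y ≤ 1 := fun y => min_le_right _ _
  have hfP : ∀ S : Set Y, MeasurableSet S → ∫⁻ y in S, f y ∂μ = P S := fun S hS => by
    rw [hf, withDensity_apply _ hS]
  have hgP' : ∀ S : Set Y, MeasurableSet S → ∫⁻ y in S, g y ∂μ = P' S := fun S hS => by
    rw [hg, withDensity_apply _ hS]
  have hfuniv : ∫⁻ y, f y ∂μ = 1 := by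
    have h := hfP Set.univ MeasurableSet.univ
    simpa using h
  have hguniv : ∫⁻ y, g y ∂μ = 1 := by
    have h := hgP' Set.univ MeasurableSet.univ
    simpa using h
  -- hockey-stick mass bound, generic in the pair
  have hhock : ∀ (f' g' : Y → ℝ≥0∞) (N N' : Measure Y), Measurable f' → Measurable g' →
      (∀ S : Set Y, MeasurableSet S → ∫⁻ y in S, f' y ∂μ = N S) →
      (∀ S : Set Y, MeasurableSet S → ∫⁻ y in S, g' y ∂μ = N' S) →
      (∀ S : Set Y, MeasurableSet S → N S ≤ E * N' S + D) → IsFiniteMeasure N' →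
      ∫⁻ y, (f' y - E * g' y) ∂μ ≤ D := by
    intro f' g' N N' hf'm hg'm hf'N hg'N hNN' hfin
    set S := {y | E * g' y < f' y} with hSdef
    have hSm : MeasurableSet S := measurableSet_lt (hg'm.const_mul E) hf'm
    have hind : (fun y => f' y - E * g' y) = S.indicator (fun y => f' y - E * g' y) := by
      funext y
      rw [Set.indicator_apply]
      split_ifs with h
      · rfl
      · have h' : ¬ E * g' y < f' y := by simpa [hSdef] using h
        exact tsub_eq_zero_of_le (not_lt.mp h')
    have hrestr : ∫⁻ y, (f' y - E * g' y) ∂μ = ∫⁻ y in S, (f' y - E * g' y) ∂μ := by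
      conv_lhs => rw [hind]
      rw [lintegral_indicator hSm]
    have hsplitS : ∫⁻ y in S, (f' y - E * g' y) ∂μ + E * ∫⁻ y in S, g' y ∂μ = N S := by
      rw [← lintegral_const_mul E hg'm,
        ← lintegral_add_left (f := fun y => f' y - E * g' y) (hf'm.sub (hg'm.const_mul E)), ← hf'N S hSm]
      refine setLIntegral_congr_fun hSm (fun y hy => ?_)
      exact tsub_add_cancel_of_le (le_of_lt hy)
    have hle : ∫⁻ y in S, (f' y - E * g' y) ∂μ + E * N' S ≤ D + E * N' S := by
      rw [hg'N S hSm] at hsplitS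
      rw [hsplitS]
      calc N S ≤ E * N' S + D := hNN' S hSm
      _ = D + E * N' S := add_comm _ _
    rw [hrestr]
    exact (ENNReal.add_le_add_iff_right (ENNReal.mul_ne_top hEt (measure_ne_top N' S))).mp hle
  have hsubf : ∫⁻ y, (f y - E * g y) ∂μ ≤ D := by
    refine hhock f g P P' hfm hgm hfP hgP' ?_ inferInstance
    intro S hS
    exact hPP' S hS
  have hsubg : ∫⁻ y, (g y - E * f y) ∂μ ≤ D := by
    refine hhock g f P' P hgm hfm hgP' hfP ?_ inferInstance
    intro S hS
    exact hP'P S hS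
  -- lower bound on the min-integral, generic
  have hminb : ∀ (f' g' : Y → ℝ≥0∞), Measurable f' → Measurable g' →
      (∫⁻ y, f' y ∂μ = 1) → (∫⁻ y, (f' y - E * g' y) ∂μ ≤ D) →
      ENNReal.ofReal (1 - δ) ≤ ∫⁻ y, min (f' y) (E * g' y) ∂μ := by
    intro f' g' hf'm hg'm huniv hsub
    have hsplit : ∀ y, min (f' y) (E * g' y) + (f' y - E * g' y) = f' y := fun y => by
      rcases le_total (f' y) (E * g' y) with h | h
      · rw [min_eq_left h, tsub_eq_zero_of_le h, add_zero]
      · rw [min_eq_right h, add_comm, tsub_add_cancel_of_le h]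
    have hsum1 : (∫⁻ y, min (f' y) (E * g' y) ∂μ) + ∫⁻ y, (f' y - E * g' y) ∂μ = 1 := by
      rw [← lintegral_add_left (hf'm.min (hg'm.const_mul E)), ← huniv]
      exact lintegral_congr hsplit
    have hsubt : ∫⁻ y, (f' y - E * g' y) ∂μ ≠ ∞ := ne_top_of_le_ne_top hDt hsub
    have heq : ∫⁻ y, min (f' y) (E * g' y) ∂μ = 1 - ∫⁻ y, (f' y - E * g' y) ∂μ := by
      rw [← hsum1, ENNReal.add_sub_cancel_right hsubt]
    rw [heq]
    calc ENNReal.ofReal (1 - δ) = 1 - D := by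
          rw [← ENNReal.ofReal_one, ← ENNReal.ofReal_sub _ hδ0]
    _ ≤ 1 - ∫⁻ y, (f' y - E * g' y) ∂μ := tsub_le_tsub_left hsub 1
  have hminf := hminb f g hfm hgm hfuniv hsubf
  have hming := hminb g f hgm hfm hguniv hsubg
  -- the raw densities u, v
  set u : Y → ℝ≥0∞ := fun y =>
    if E * g y < f y then g y / B else if E * f y < g y then 0 else (E * f y - g y) / Cc
    with hudef
  set v : Y → ℝ≥0∞ := fun y =>
    if E * g y < f y then 0 else if E * f y < g y then f y / B else (E * g y - f y) / Cc
    with hvdef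
  have hSm : MeasurableSet {y | E * g y < f y} := measurableSet_lt (hgm.const_mul E) hfm
  have hS'm : MeasurableSet {y | E * f y < g y} := measurableSet_lt (hfm.const_mul E) hgm
  have hum : Measurable u := Measurable.ite hSm (hgm.div_const B)
    (Measurable.ite hS'm measurable_const (((hfm.const_mul E).sub hgm).div_const Cc))
  have hvm : Measurable v := Measurable.ite hSm measurable_const
    (Measurable.ite hS'm (hfm.div_const B) (((hgm.const_mul E).sub hfm).div_const Cc))
  have hgEg : ∀ y : Y, g y ≤ E * g y := fun y => le_mul_of_one_le_left zero_le hE1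
  have hfEf : ∀ y : Y, f y ≤ E * f y := fun y => le_mul_of_one_le_left zero_le hE1
  -- pointwise key facts
  have hkey : ∀ y, (A * u y + B * v y ≤ f y) ∧ (B * u y + A * v y ≤ g y) ∧
      (E * u y + v y = min (f y) (E * g y) / B) ∧
      (u y + E * v y = min (g y) (E * f y) / B) := by
    intro y
    by_cases h1 : E * g y < f y
    · simp only [hudef, hvdef, if_pos h1]
      have hgB : B * (g y / B) = g y := ENNReal.mul_div_cancel hB0 hBt
      refine ⟨?_, ?_, ?_, ?_⟩
      · simp only [mul_zero, add_zero]
        rw [hAEB, mul_assoc, hgB]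
        exact h1.le
      · simp only [mul_zero, add_zero]
        rw [hgB]
      · simp only [mul_zero, add_zero]
        rw [min_eq_right h1.le, ← mul_div_assoc]
      · simp only [mul_zero, add_zero]
        rw [min_eq_left (le_of_lt (lt_of_le_of_lt (hgEg y) (h1.trans_le (hfEf y))))]
    · by_cases h2 : E * f y < g y
      · simp only [hudef, hvdef, if_neg h1, if_pos h2]
        have hfB : B * (f y / B) = f y := ENNReal.mul_div_cancel hB0 hBt
        refine ⟨?_, ?_, ?_, ?_⟩
        · simp only [mul_zero, zero_add]
          rw [hfB]
        · simp only [mul_zero, zero_add]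
          rw [hAEB, mul_assoc, hfB]
          exact h2.le
        · simp only [mul_zero, zero_add]
          rw [min_eq_left (not_lt.mp h1)]
        · simp only [mul_zero, zero_add]
          rw [min_eq_right h2.le, ← mul_div_assoc]
      · simp only [hudef, hvdef, if_neg h1, if_neg h2]
        have hfEg : f y ≤ E * g y := not_lt.mp h1
        have hgEf : g y ≤ E * f y := not_lt.mp h2
        have hp : (E * f y - g y) + g y = E * f y := tsub_add_cancel_of_le hgEf
        have hq : (E * g y - f y) + f y = E * g y := tsub_add_cancel_of_le hfEg
        have hgyt : g y ≠ ∞ := ne_top_of_le_ne_top ENNReal.one_ne_top (hgle y)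
        have hfyt : f y ≠ ∞ := ne_top_of_le_ne_top ENNReal.one_ne_top (hfle y)
        set p := E * f y - g y with hpdef
        set q := E * g y - f y with hqdef
        have hT : B * g y * E + B * f y ≠ ∞ :=
          ENNReal.add_ne_top.mpr ⟨ENNReal.mul_ne_top (ENNReal.mul_ne_top hBt hgyt) hEt,
            ENNReal.mul_ne_top hBt hfyt⟩
        have hT' : B * f y * E + B * g y ≠ ∞ :=
          ENNReal.add_ne_top.mpr ⟨ENNReal.mul_ne_top (ENNReal.mul_ne_top hBt hfyt) hEt,
            ENNReal.mul_ne_top hBt hgyt⟩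
        have hBX : B * (E * p + q) = Cc * f y := by
          refine (ENNReal.add_right_inj hT).mp ?_
          calc (B * g y * E + B * f y) + B * (E * p + q)
              = B * E * (p + g y) + B * (q + f y) := by ring
            _ = B * E * (E * f y) + B * (E * g y) := by rw [hp, hq]
            _ = B * g y * E + (Cc + B) * f y := by rw [hCB]; ring
            _ = (B * g y * E + B * f y) + Cc * f y := by ring
        have hBX' : B * (E * q + p) = Cc * g y := by
          refine (ENNReal.add_right_inj hT').mp ?_
          calc (B * f y * E + B * g y) + B * (E * q + p)
              = B * E * (q + f y) + B * (p + g y) := by ring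
            _ = B * E * (E * g y) + B * (E * f y) := by rw [hq, hp]
            _ = B * f y * E + (Cc + B) * g y := by rw [hCB]; ring
            _ = (B * f y * E + B * g y) + Cc * g y := by ring
        refine ⟨?_, ?_, ?_, ?_⟩
        · have hcomb : A * (p / Cc) + B * (q / Cc) = (B * (E * p + q)) / Cc := by
            rw [← mul_div_assoc, ← mul_div_assoc, ENNReal.div_add_div_same, hAEB]
            congr 1
            ring
          rw [hcomb, hBX]
          exact ENNReal.div_le_of_le_mul (le_of_eq (mul_comm _ _))
        · have hcomb : B * (p / Cc) + A * (q / Cc) = (B * (E * q + p)) / Cc := by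
            rw [← mul_div_assoc, ← mul_div_assoc, ENNReal.div_add_div_same, hAEB]
            congr 1
            ring
          rw [hcomb, hBX']
          exact ENNReal.div_le_of_le_mul (le_of_eq (mul_comm _ _))
        · rw [min_eq_left hfEg, ← mul_div_assoc, ENNReal.div_add_div_same,
            ENNReal.div_eq_div_iff hB0 hBt hCc0 hCct]
          exact hBX
        · rw [min_eq_left hgEf, ← mul_div_assoc, ENNReal.div_add_div_same,
            ENNReal.div_eq_div_iff hB0 hBt hCc0 hCct, add_comm p (E * q)]
          exact hBX'
  have hL1 : ∀ y, A * u y + B * v y ≤ f y := fun y => (hkey y).1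
  have hL2 : ∀ y, B * u y + A * v y ≤ g y := fun y => (hkey y).2.1
  -- mass identities
  have hMuid : E * (∫⁻ y, u y ∂μ) + ∫⁻ y, v y ∂μ = (∫⁻ y, min (f y) (E * g y) ∂μ) / B := by
    rw [← lintegral_const_mul E hum, ← lintegral_add_left (hum.const_mul E)]
    have h1 : ∫⁻ y, (E * u y + v y) ∂μ = ∫⁻ y, min (f y) (E * g y) / B ∂μ :=
      lintegral_congr fun y => (hkey y).2.2.1
    rw [h1]
    simp only [div_eq_mul_inv]
    rw [lintegral_mul_const' _ _ (by simpa using hB0)]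
  have hMvid : (∫⁻ y, u y ∂μ) + E * ∫⁻ y, v y ∂μ = (∫⁻ y, min (g y) (E * f y) ∂μ) / B := by
    rw [← lintegral_const_mul E hvm, ← lintegral_add_right _ (hvm.const_mul E)]
    have h1 : ∫⁻ y, (u y + E * v y) ∂μ = ∫⁻ y, min (g y) (E * f y) / B ∂μ :=
      lintegral_congr fun y => (hkey y).2.2.2
    rw [h1]
    simp only [div_eq_mul_inv]
    rw [lintegral_mul_const' _ _ (by simpa using hB0)]
  have hbound1 : (E : ℝ≥0∞) + 1 ≤ E * (∫⁻ y, u y ∂μ) + ∫⁻ y, v y ∂μ := by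
    rw [hMuid, ← hEp1]
    exact ENNReal.div_le_div_right hminf B
  have hbound2 : (E : ℝ≥0∞) + 1 ≤ (∫⁻ y, u y ∂μ) + E * ∫⁻ y, v y ∂μ := by
    rw [hMvid, ← hEp1]
    exact ENNReal.div_le_div_right hming B
  -- finiteness of the masses
  have hub : ∀ y, u y ≤ 1 / B := fun y => by
    calc u y ≤ E * u y := le_mul_of_one_le_left zero_le hE1
    _ ≤ E * u y + v y := le_self_add
    _ = min (f y) (E * g y) / B := (hkey y).2.2.1
    _ ≤ 1 / B := ENNReal.div_le_div_right (le_trans (min_le_left _ _) (hfle y)) B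
  have hvb : ∀ y, v y ≤ 1 / B := fun y => by
    calc v y ≤ E * v y := le_mul_of_one_le_left zero_le hE1
    _ ≤ u y + E * v y := le_add_self
    _ = min (g y) (E * f y) / B := (hkey y).2.2.2
    _ ≤ 1 / B := ENNReal.div_le_div_right (le_trans (min_le_left _ _) (hgle y)) B
  have hconstt : (1 / B) * μ Set.univ ≠ ∞ :=
    ENNReal.mul_ne_top (ENNReal.div_lt_top ENNReal.one_ne_top hB0).ne (measure_ne_top μ _)
  have hut : ∫⁻ y, u y ∂μ ≠ ∞ := by
    refine ne_top_of_le_ne_top hconstt ?_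
    calc ∫⁻ y, u y ∂μ ≤ ∫⁻ _, 1 / B ∂μ := lintegral_mono hub
    _ = (1 / B) * μ Set.univ := lintegral_const _
  have hvt : ∫⁻ y, v y ∂μ ≠ ∞ := by
    refine ne_top_of_le_ne_top hconstt ?_
    calc ∫⁻ y, v y ∂μ ≤ ∫⁻ _, 1 / B ∂μ := lintegral_mono hvb
    _ = (1 / B) * μ Set.univ := lintegral_const _
  -- case analysis and transfer
  rcases lt_or_ge (∫⁻ y, u y ∂μ) 1 with hu1 | hu1
  · obtain ⟨U, V, hUm, hVm, hfUV, hgUV, hU1, hUt, hV1, hVt⟩ :=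
      transfer μ E A B hE1 hEt hBt hAEB f g u v hum hvm hL1 hL2 hut hvt hbound1 hu1
    exact assemble μ A B D hsum P P' f g U V hfm hgm hUm hVm hf hg hfUV hgUV hU1 hUt hV1 hVt
  · rcases lt_or_ge (∫⁻ y, v y ∂μ) 1 with hv1 | hv1
    · obtain ⟨U, V, hUm, hVm, hgUV, hfUV, hU1, hUt, hV1, hVt⟩ :=
        transfer μ E A B hE1 hEt hBt hAEB g f v u hvm hum
          (fun y => by rw [add_comm]; exact hL2 y)
          (fun y => by rw [add_comm]; exact hL1 y) hvt hut
          (by rwa [add_comm ((∫⁻ y, u y ∂μ)) (E * ∫⁻ y, v y ∂μ)] at hbound2) hv1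
      refine assemble μ A B D hsum P P' f g V U hfm hgm hVm hUm hf hg ?_ ?_ hV1 hVt hU1 hUt
      · intro y
        rw [add_comm]
        exact hfUV y
      · intro y
        rw [add_comm]
        exact hgUV y
    · exact assemble μ A B D hsum P P' f g u v hfm hgm hum hvm hf hg hL1 hL2 hu1 hut hv1 hvt

/-- Decomposition of a DP mechanism as a leaky randomized response: if
`R : 𝒳 → 𝒴` is `(ε, δ)`-DP and `x ∼ x'` are neighboring, then there is a randomized
algorithm `Q : {0, 1, 2, 3} → 𝒴` (labels `2` and `3` standing for "I am x" and
"I am x'") such that, as probability measures,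
`R(x) = ((1-δ)e^ε/(e^ε+1))·Q(0) + ((1-δ)/(e^ε+1))·Q(1) + δ·Q(2)` and
`R(x') = ((1-δ)/(e^ε+1))·Q(0) + ((1-δ)e^ε/(e^ε+1))·Q(1) + δ·Q(3)`. -/
theorem dp_mechanism_as_leaky_randomized_response {X Y : Type*} [MeasurableSpace Y]
    (Neighbor : X → X → Prop) (hsymm : Symmetric Neighbor)
    (ε δ : ℝ) (hε : 0 < ε) (hδ0 : 0 ≤ δ) (hδ1 : δ ≤ 1)
    (R : X → Measure Y) (hprob : ∀ x, IsProbabilityMeasure (R x))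
    (hR : ∀ x x', Neighbor x x' → ∀ S : Set Y, MeasurableSet S →
      R x S ≤ ENNReal.ofReal (Real.exp ε) * R x' S + ENNReal.ofReal δ)
    (x x' : X) (hxx' : Neighbor x x') :
    ∃ Q : Fin 4 → Measure Y, (∀ i, IsProbabilityMeasure (Q i)) ∧
      R x = ENNReal.ofReal ((1 - δ) * Real.exp ε / (Real.exp ε + 1)) • Q 0
          + ENNReal.ofReal ((1 - δ) / (Real.exp ε + 1)) • Q 1
          + ENNReal.ofReal δ • Q 2 ∧
      R x' = ENNReal.ofReal ((1 - δ) / (Real.exp ε + 1)) • Q 0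
          + ENNReal.ofReal ((1 - δ) * Real.exp ε / (Real.exp ε + 1)) • Q 1
          + ENNReal.ofReal δ • Q 3 := by
  haveI := hprob x
  haveI := hprob x'
  rcases eq_or_lt_of_le hδ1 with hδeq | hδlt
  · refine ⟨![R x, R x, R x, R x'], ?_, ?_, ?_⟩
    · intro i
      fin_cases i <;> simp [hprob x, hprob x']
    · subst hδeq
      simp
    · subst hδeq
      simp
  · obtain ⟨Q0, Q1, Q2, Q3, h0, h1, h2, h3, hEq1, hEq2⟩ :=
      pair_decomp ε δ hε hδ0 hδlt (R x) (R x') (hR x x' hxx') (hR x' x (hsymm hxx'))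
    refine ⟨![Q0, Q1, Q2, Q3], ?_, ?_, ?_⟩
    · intro i
      fin_cases i <;> simpa
    · simpa using hEq1
    · simpa using hEq2
end
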